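/- arXiv:1803.10113 — 2 statements merged into one kernel-verified Lean document; each statement's English description precedes it below -/
import Mathlib

section
/- In a path category, let f be a fibration of n-types (n ≥ −2). Then: (1) any fibration g obtained by pulling back f along some map is a fibration of n-types; (2) if w is an equivalence and g is a fibration with f ≃ gw or fw ≃ g, then g is a fibration of n-types; (3) if w is an equivalence and g is a fibration with f ≃ wg or wf ≃ g, then g is a fibration of n-types. -/
namespace EffPaper

open CategoryTheory

universe v u

/-! ### Path categories (Van den Berg–Moerdijk style), abstractly.

A `PathStruct` on a category is a pair of classes of maps: fibrations and equivalences.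
`IsPathCategory` expresses the seven axioms of a path category. -/

structure PathStruct (C : Type u) [Category.{v} C] where
  Fib : ∀ ⦃X Y : C⦄, (X ⟶ Y) → Prop
  Eqv : ∀ ⦃X Y : C⦄, (X ⟶ Y) → Prop

section PathCatDefs

variable {C : Type u} [Category.{v} C]

/-- `T` is a terminal object. -/
def IsTerminalObj (T : C) : Prop := ∀ Z : C, ∃ f : Z ⟶ T, ∀ g : Z ⟶ T, g = f

/-- The square with projections `p₁, p₂` is a pullback of the cospan `f, g`. -/
def IsPB {P X Y Z : C} (p₁ : P ⟶ X) (p₂ : P ⟶ Y) (f : X ⟶ Z) (g : Y ⟶ Z) : Prop :=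
  p₁ ≫ f = p₂ ≫ g ∧ ∀ (Q : C) (q₁ : Q ⟶ X) (q₂ : Q ⟶ Y), q₁ ≫ f = q₂ ≫ g →
    ∃! h : Q ⟶ P, h ≫ p₁ = q₁ ∧ h ≫ p₂ = q₂

/-- `p₁, p₂` exhibit their common domain as a binary product of `X` and `Y`. -/
def IsBinProd {P X Y : C} (p₁ : P ⟶ X) (p₂ : P ⟶ Y) : Prop :=
  ∀ (Q : C) (q₁ : Q ⟶ X) (q₂ : Q ⟶ Y), ∃! h : Q ⟶ P, h ≫ p₁ = q₁ ∧ h ≫ p₂ = q₂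

variable (S : PathStruct C)

/-- `X → PX → X × X` is a path object for `X`: the first map is an equivalence, the
second (the pairing of `s` and `t` into a binary product `X × X`) is a fibration,
and the composite is the diagonal. -/
def IsPathObj {X PX : C} (r : X ⟶ PX) (s t : PX ⟶ X) : Prop :=
  S.Eqv r ∧ r ≫ s = 𝟙 X ∧ r ≫ t = 𝟙 X ∧
  ∃ (W : C) (π₁ π₂ : W ⟶ X) (h : PX ⟶ W),
    IsBinProd π₁ π₂ ∧ h ≫ π₁ = s ∧ h ≫ π₂ = t ∧ S.Fib h

/-- A path object for `p : X ⟶ I` in the slice path category `C(I)`: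
a factorisation of the fibrewise diagonal `X ⟶ X ×_I X` as an equivalence `r`
followed by a fibration. -/
def IsRelPathObj {X I PX : C} (p : X ⟶ I) (r : X ⟶ PX) (s t : PX ⟶ X) : Prop :=
  S.Eqv r ∧ r ≫ s = 𝟙 X ∧ r ≫ t = 𝟙 X ∧ s ≫ p = t ≫ p ∧
  ∃ (W : C) (π₁ π₂ : W ⟶ X) (h : PX ⟶ W),
    IsPB π₁ π₂ p p ∧ h ≫ π₁ = s ∧ h ≫ π₂ = t ∧ S.Fib h

/-- The seven axioms for a path category. -/
structure IsPathCategory : Prop where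
  fib_of_iso : ∀ {X Y : C} (f : X ⟶ Y), IsIso f → S.Fib f
  fib_comp : ∀ {X Y Z : C} (f : X ⟶ Y) (g : Y ⟶ Z), S.Fib f → S.Fib g → S.Fib (f ≫ g)
  terminal : ∃ T : C, IsTerminalObj T ∧ ∀ (X : C) (f : X ⟶ T), S.Fib f
  pullback : ∀ {X Y Z : C} (f : X ⟶ Z) (g : Y ⟶ Z), S.Fib f →
    ∃ (P : C) (p₁ : P ⟶ X) (p₂ : P ⟶ Y), IsPB p₁ p₂ f g ∧ S.Fib p₂
  eqv_of_iso : ∀ {X Y : C} (f : X ⟶ Y), IsIso f → S.Eqv f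
  two_out_of_six : ∀ {X Y Z W : C} (f : X ⟶ Y) (g : Y ⟶ Z) (h : Z ⟶ W),
    S.Eqv (f ≫ g) → S.Eqv (g ≫ h) →
    S.Eqv f ∧ S.Eqv g ∧ S.Eqv h ∧ S.Eqv (f ≫ g ≫ h)
  path_obj : ∀ X : C, ∃ (PX : C) (r : X ⟶ PX) (s t : PX ⟶ X), IsPathObj S r s t
  triv_fib_pb : ∀ {X Y Z P : C} (f : X ⟶ Z) (g : Y ⟶ Z) (p₁ : P ⟶ X) (p₂ : P ⟶ Y),
    S.Fib f → S.Eqv f → IsPB p₁ p₂ f g → S.Fib p₂ ∧ S.Eqv p₂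
  triv_fib_sect : ∀ {X Y : C} (f : X ⟶ Y), S.Fib f → S.Eqv f → ∃ s : Y ⟶ X, s ≫ f = 𝟙 Y

/-- Two parallel maps are homotopic: `(f,g)` factors through some path object. -/
def Homotopic {Z X : C} (f g : Z ⟶ X) : Prop :=
  ∃ (PX : C) (r : X ⟶ PX) (s t : PX ⟶ X), IsPathObj S r s t ∧
    ∃ H : Z ⟶ PX, H ≫ s = f ∧ H ≫ t = g

/-- `f` and `g` are fibrewise homotopic over the codomain of `p`:
`(f,g)` factors through some path object of `p` in the slice. -/
def FibHomotopic {Z X I : C} (p : X ⟶ I) (f g : Z ⟶ X) : Prop :=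
  ∃ (PX : C) (r : X ⟶ PX) (s t : PX ⟶ X), IsRelPathObj S p r s t ∧
    ∃ H : Z ⟶ PX, H ≫ s = f ∧ H ≫ t = g

/-- `IsNTypeFib S n f` says that `f` is a fibration of `(n-2)`-types; so `n = 0`
corresponds to hlevel `-2` (trivial fibrations), `n = 1` to propositions,
`n = 2` to sets and `n = 3` to groupoids. -/
def IsNTypeFib : ℕ → ∀ ⦃Y X : C⦄, (Y ⟶ X) → Prop
  | 0, _, _, f => S.Fib f ∧ S.Eqv f
  | n+1, Y, _, f => S.Fib f ∧ ∃ (PY W : C) (r : Y ⟶ PY) (s t : PY ⟶ Y)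
      (π₁ π₂ : W ⟶ Y) (h : PY ⟶ W),
      IsRelPathObj S f r s t ∧ IsPB π₁ π₂ f f ∧ h ≫ π₁ = s ∧ h ≫ π₂ = t ∧
      IsNTypeFib n h

/-- The (strictly) commutative square with vertical fibrations `g` (left) and `f` (right),
top `top` and bottom `bot`, is a homotopy pullback: the induced map to the actual
pullback is an equivalence. -/
def IsHomotopyPB {D Cc B A : C} (g : D ⟶ Cc) (top : D ⟶ B) (f : B ⟶ A) (bot : Cc ⟶ A) :
    Prop :=
  g ≫ bot = top ≫ f ∧ ∃ (P : C) (p₁ : P ⟶ Cc) (p₂ : P ⟶ B) (h : D ⟶ P),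
    IsPB p₁ p₂ bot f ∧ h ≫ p₁ = g ∧ h ≫ p₂ = top ∧ S.Eqv h

/-- A transport structure on the fibration `p : Y ⟶ X`, relative to the path object
`(PX, r, s, t)` and the pullback `(Q, q₁, q₂)` of `s : PX ⟶ X` along `p`:
a map `Γ : Y ×_X PX ⟶ Y` with `p ∘ Γ = t ∘ q₂` and `Γ ∘ (1_Y, r ∘ p) ≃_X 1_Y`. -/
def IsTransport {Y X PX Q : C} (p : Y ⟶ X) (r : X ⟶ PX) (s t : PX ⟶ X)
    (q₁ : Q ⟶ Y) (q₂ : Q ⟶ PX) (Γ : Q ⟶ Y) : Prop :=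
  Γ ≫ p = q₂ ≫ t ∧
  ∀ j : Y ⟶ Q, j ≫ q₁ = 𝟙 Y → j ≫ q₂ = p ≫ r → FibHomotopic S p (j ≫ Γ) (𝟙 Y)

/-- A fibration `p : Y ⟶ X` is univalent: whenever `f, g : Z ⟶ X` and
`w : f*p ⟶ g*p` is an equivalence over `Z`, there is a homotopy `H` from `f` to `g`
such that `w` is fibrewise homotopic over `Z` to the map induced by `H` and a
transport structure on `p`. -/
def Univalent {Y X : C} (p : Y ⟶ X) : Prop :=
  ∀ {Z Zf Zg : C} (f g : Z ⟶ X) (a₁ : Zf ⟶ Z) (a₂ : Zf ⟶ Y) (b₁ : Zg ⟶ Z) (b₂ : Zg ⟶ Y),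
    IsPB a₁ a₂ f p → IsPB b₁ b₂ g p →
    ∀ w : Zf ⟶ Zg, w ≫ b₁ = a₁ → S.Eqv w →
    ∃ (PX Q : C) (r : X ⟶ PX) (s t : PX ⟶ X) (q₁ : Q ⟶ Y) (q₂ : Q ⟶ PX) (Γ : Q ⟶ Y)
      (H : Z ⟶ PX) (k : Zf ⟶ Q) (w' : Zf ⟶ Zg),
      IsPathObj S r s t ∧ IsPB q₁ q₂ p s ∧ IsTransport S p r s t q₁ q₂ Γ ∧
      H ≫ s = f ∧ H ≫ t = g ∧
      k ≫ q₁ = a₂ ∧ k ≫ q₂ = a₁ ≫ H ∧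
      w' ≫ b₁ = a₁ ∧ w' ≫ b₂ = k ≫ Γ ∧
      FibHomotopic S b₁ w w'

/-- `π : E ⟶ U` is a representation for the class `Small`: it is small, and every
small fibration is a homotopy pullback of it. -/
def IsRepresentation (Small : ∀ ⦃X Y : C⦄, (X ⟶ Y) → Prop) {E U : C} (π : E ⟶ U) : Prop :=
  Small π ∧ ∀ ⦃B A : C⦄ (f : B ⟶ A), Small f →
    ∃ (c : A ⟶ U) (top : B ⟶ E), IsHomotopyPB S f top π c

/-- `M` is a good lift for the universal property of the homotopy Π-type
`(pE, u₁, u₂, ε)` of `g` along `f`, at the map `h : A ⟶ X` with chosen pullback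
`(Ah, v₁, v₂)` of `h` along `f` and `m : f*h ⟶ g` over `Y`. -/
def HPiLiftGood {Y X Z E F A Ah : C} (f : Y ⟶ X) (g : Z ⟶ Y) (pE : E ⟶ X)
    (u₁ : F ⟶ E) (u₂ : F ⟶ Y) (ε : F ⟶ Z)
    (h : A ⟶ X) (v₁ : Ah ⟶ A) (v₂ : Ah ⟶ Y) (m : Ah ⟶ Z) (M : A ⟶ E) : Prop :=
  M ≫ pE = h ∧ ∀ fM : Ah ⟶ F, fM ≫ u₁ = v₁ ≫ M → fM ≫ u₂ = v₂ →
    FibHomotopic S g (fM ≫ ε) m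

/-- `(pE, u₁, u₂, ε)` is a homotopy Π-type of the fibration `g : Z ⟶ Y` along the
fibration `f : Y ⟶ X`.  Here `pE : E ⟶ X` is the Π-fibration, `(F, u₁, u₂)` is a
pullback of `pE` along `f`, and `ε : f*pE ⟶ g` is the counit (a map over `Y`). -/
structure IsHPi {Y X Z E F : C} (f : Y ⟶ X) (g : Z ⟶ Y) (pE : E ⟶ X)
    (u₁ : F ⟶ E) (u₂ : F ⟶ Y) (ε : F ⟶ Z) : Prop where
  fib : S.Fib pE
  pb : IsPB u₁ u₂ pE f
  over' : ε ≫ g = u₂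
  lift : ∀ {A Ah : C} (h : A ⟶ X) (v₁ : Ah ⟶ A) (v₂ : Ah ⟶ Y), IsPB v₁ v₂ h f →
    ∀ m : Ah ⟶ Z, m ≫ g = v₂ →
      ∃ M : A ⟶ E, HPiLiftGood S f g pE u₁ u₂ ε h v₁ v₂ m M
  unique : ∀ {A Ah : C} (h : A ⟶ X) (v₁ : Ah ⟶ A) (v₂ : Ah ⟶ Y), IsPB v₁ v₂ h f →
    ∀ m : Ah ⟶ Z, m ≫ g = v₂ → ∀ M M' : A ⟶ E,
      HPiLiftGood S f g pE u₁ u₂ ε h v₁ v₂ m M →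
      HPiLiftGood S f g pE u₁ u₂ ε h v₁ v₂ m M' →
      FibHomotopic S pE M M'

/-- The path category has homotopy Π-types. -/
def HasHPi : Prop := ∀ ⦃Y X Z : C⦄ (f : Y ⟶ X) (g : Z ⟶ Y), S.Fib f → S.Fib g →
  ∃ (E F : C) (pE : E ⟶ X) (u₁ : F ⟶ E) (u₂ : F ⟶ Y) (ε : F ⟶ Z),
    IsHPi S f g pE u₁ u₂ ε

/-- A class of small fibrations: contained in the fibrations, containing all
isomorphisms, closed under composition and stable under homotopy pullback. -/
def IsSmallClass (Small : ∀ ⦃X Y : C⦄, (X ⟶ Y) → Prop) : Prop :=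
  (∀ ⦃X Y : C⦄ (f : X ⟶ Y), Small f → S.Fib f) ∧
  (∀ ⦃X Y : C⦄ (f : X ⟶ Y), IsIso f → Small f) ∧
  (∀ ⦃X Y Z : C⦄ (f : X ⟶ Y) (g : Y ⟶ Z), Small f → Small g → Small (f ≫ g)) ∧
  (∀ ⦃D Cc B A : C⦄ (g : D ⟶ Cc) (top : D ⟶ B) (f : B ⟶ A) (bot : Cc ⟶ A),
    S.Fib g → S.Fib f → Small f → IsHomotopyPB S g top f bot → Small g)

/-- The class `Small` is closed under homotopy Π-types along arbitrary fibrations: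
it is impredicative (polymorphic). -/
def ClosedUnderHPi (Small : ∀ ⦃X Y : C⦄, (X ⟶ Y) → Prop) : Prop :=
  ∀ ⦃Y X Z : C⦄ (f : Y ⟶ X) (g : Z ⟶ Y), S.Fib f → Small g →
    ∀ ⦃E F : C⦄ (pE : E ⟶ X) (u₁ : F ⟶ E) (u₂ : F ⟶ Y) (ε : F ⟶ Z),
      IsHPi S f g pE u₁ u₂ ε → Small pE

end PathCatDefs

end EffPaper

/-
Pullback stability goes by induction on `n`: pulling a relative path object of `f` back along
`Z ⟶ X` gives a relative path object of the pulled-back fibration whose structure map is a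
pullback of the original one.

For the homotopy statements, transport along the given homotopy, combined with a homotopy
inverse of `w`, produces an equivalence `e` with `g = e ≫ p` on the nose, where `p` is `f` or a
pullback of `f` along an equivalence. It then suffices that `e ≫ p` is a fibration of `n`-types
whenever `p` is one and `e` is an equivalence, again by induction on `n`. By right properness
(pullbacks of equivalences along fibrations are equivalences) `e` induces an equivalence of
fibred squares `D ×_X D ⟶ P ×_X P`, and the path-object fibration of `e ≫ p` is, up to an
equivalence over `D ×_X D`, the pullback of that of `p` along it.
-/

namespace EffPaper

open CategoryTheory

variable {C : Type u} [Category.{v} C] {S : PathStruct C}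

theorem IsTerminalObj.hom_ext {T Z : C} (hT : IsTerminalObj T) (a b : Z ⟶ T) : a = b := by
  obtain ⟨c, hc⟩ := hT Z
  rw [hc a, hc b]

namespace IsPB

variable {P X Y Z : C} {p₁ : P ⟶ X} {p₂ : P ⟶ Y} {f : X ⟶ Z} {g : Y ⟶ Z}

theorem hom_ext (h : IsPB p₁ p₂ f g) {Q : C} {a b : Q ⟶ P}
    (h₁ : a ≫ p₁ = b ≫ p₁) (h₂ : a ≫ p₂ = b ≫ p₂) : a = b := by
  obtain ⟨c, -, hc⟩ := h.2 Q (b ≫ p₁) (b ≫ p₂) (by simp only [Category.assoc, h.1])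
  rw [hc a ⟨h₁, h₂⟩, hc b ⟨rfl, rfl⟩]

theorem symm (h : IsPB p₁ p₂ f g) : IsPB p₂ p₁ g f := by
  refine ⟨h.1.symm, fun Q q₁ q₂ hq => ?_⟩
  obtain ⟨c, ⟨hc₁, hc₂⟩, hc⟩ := h.2 Q q₂ q₁ hq.symm
  exact ⟨c, ⟨hc₂, hc₁⟩, fun d hd => hc d ⟨hd.2, hd.1⟩⟩

theorem of_right (h : IsPB p₁ p₂ f g) {O A : C} {o₁ : O ⟶ A} {m : O ⟶ P} {e : A ⟶ X}
    (comm : o₁ ≫ e = m ≫ p₁) (outer : IsPB o₁ (m ≫ p₂) (e ≫ f) g) : IsPB o₁ m e p₁ := by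
  refine ⟨comm, fun V v₁ v₂ hv => ?_⟩
  obtain ⟨c, ⟨hc₁, hc₂⟩, hc⟩ := outer.2 V v₁ (v₂ ≫ p₂)
    (by rw [← Category.assoc, hv, Category.assoc, Category.assoc, h.1])
  have hcm : c ≫ m = v₂ := h.hom_ext
    (by rw [Category.assoc, ← comm, ← Category.assoc, hc₁, hv]) (by rw [Category.assoc, hc₂])
  exact ⟨c, ⟨hc₁, hcm⟩, fun d hd => hc d ⟨hd.1, by rw [← Category.assoc, hd.2]⟩⟩

theorem paste (h : IsPB p₁ p₂ f g) {O A : C} {o₁ : O ⟶ A} {m : O ⟶ P} {e : A ⟶ X}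
    (hl : IsPB o₁ m e p₁) : IsPB o₁ (m ≫ p₂) (e ≫ f) g := by
  refine ⟨by rw [reassoc_of% hl.1, h.1, Category.assoc], fun V v₁ v₂ hv => ?_⟩
  obtain ⟨c, ⟨hc₁, hc₂⟩, -⟩ := h.2 V (v₁ ≫ e) v₂ (by rw [Category.assoc, hv])
  obtain ⟨d, ⟨hd₁, hd₂⟩, hd⟩ := hl.2 V v₁ c hc₁.symm
  refine ⟨d, ⟨hd₁, by rw [reassoc_of% hd₂, hc₂]⟩, fun y hy => hd y ⟨hy.1, ?_⟩⟩
  exact h.hom_ext (by rw [Category.assoc, ← hl.1, reassoc_of% hy.1, hc₁])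
    (by rw [Category.assoc, hy.2, hc₂])

/-- For `P = Y ×_X Z` and `W = Y ×_X Y`, base change of `W` along `Z ⟶ X` is the
fibred square `P ×_Z P`, and it is the pullback of `W` along `P ⟶ Y`. -/
theorem fiberProduct {Y X Z P W W' : C} {f : Y ⟶ X} {m : Z ⟶ X}
    {p₁ : P ⟶ Y} {p₂ : P ⟶ Z} (hP : IsPB p₁ p₂ f m) {π₁ π₂ : W ⟶ Y} (hW : IsPB π₁ π₂ f f)
    {b₁ : W' ⟶ W} {b₂ : W' ⟶ Z} (hW' : IsPB b₁ b₂ (π₁ ≫ f) m) {π₁' π₂' : W' ⟶ P}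
    (h₁ : π₁' ≫ p₁ = b₁ ≫ π₁) (h₁' : π₁' ≫ p₂ = b₂) (h₂ : π₂' ≫ p₁ = b₁ ≫ π₂)
    (h₂' : π₂' ≫ p₂ = b₂) : IsPB b₁ π₁' π₁ p₁ ∧ IsPB π₁' π₂' p₂ p₂ := by
  have hb₁ : IsPB b₁ π₁' π₁ p₁ := hP.of_right h₁.symm (by rwa [h₁'])
  refine ⟨hb₁, hP.symm.of_right (h₁'.trans h₂'.symm) ?_⟩
  rw [h₂, ← hP.1]
  exact hW.paste hb₁.symm

end IsPB

theorem isBinProd_iff_isPB {T P X Y : C} (hT : IsTerminalObj T) (π₁ : P ⟶ X) (π₂ : P ⟶ Y)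
    (a : X ⟶ T) (b : Y ⟶ T) : IsBinProd π₁ π₂ ↔ IsPB π₁ π₂ a b :=
  ⟨fun h => ⟨hT.hom_ext _ _, fun Q q₁ q₂ _ => h Q q₁ q₂⟩,
    fun h Q q₁ q₂ => h.2 Q q₁ q₂ (hT.hom_ext _ _)⟩

theorem isPathObj_iff_isRelPathObj {T X PX : C} (hT : IsTerminalObj T) (a : X ⟶ T)
    {r : X ⟶ PX} {s t : PX ⟶ X} : IsPathObj S r s t ↔ IsRelPathObj S a r s t := by
  simp only [IsPathObj, IsRelPathObj, isBinProd_iff_isPB hT _ _ a a,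
    hT.hom_ext (s ≫ a) (t ≫ a), true_and]

theorem homotopic_iff_fibHomotopic {T Z X : C} (hT : IsTerminalObj T) (a : X ⟶ T)
    {u v : Z ⟶ X} : Homotopic S u v ↔ FibHomotopic S a u v := by
  simp only [Homotopic, FibHomotopic, isPathObj_iff_isRelPathObj hT a]

theorem IsPathCategory.eqv_id (hS : IsPathCategory S) (X : C) : S.Eqv (𝟙 X) :=
  hS.eqv_of_iso _ inferInstance

theorem IsPathCategory.eqv_comp (hS : IsPathCategory S) {X Y Z : C} {f : X ⟶ Y} {g : Y ⟶ Z}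
    (hf : S.Eqv f) (hg : S.Eqv g) : S.Eqv (f ≫ g) := by
  simpa using (hS.two_out_of_six f (𝟙 _) g (by rwa [Category.comp_id])
    (by rwa [Category.id_comp])).2.2.2

theorem IsPathCategory.eqv_cancel_left (hS : IsPathCategory S) {X Y Z : C} {f : X ⟶ Y}
    {g : Y ⟶ Z} (hf : S.Eqv f) (hfg : S.Eqv (f ≫ g)) : S.Eqv g :=
  (hS.two_out_of_six (𝟙 _) f g (by rwa [Category.id_comp]) hfg).2.2.1

theorem IsPathCategory.eqv_cancel_right (hS : IsPathCategory S) {X Y Z : C} {f : X ⟶ Y}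
    {g : Y ⟶ Z} (hg : S.Eqv g) (hfg : S.Eqv (f ≫ g)) : S.Eqv f :=
  (hS.two_out_of_six f g (𝟙 _) hfg (by rwa [Category.comp_id])).1

theorem IsPathCategory.eqv_of_section (hS : IsPathCategory S) {X Y : C} {ι : X ⟶ Y}
    {ρ : Y ⟶ X} (h : ι ≫ ρ = 𝟙 X) (hρ : S.Eqv ρ) : S.Eqv ι :=
  hS.eqv_cancel_right hρ (h ▸ hS.eqv_id X)

theorem IsPathCategory.fib_of_isPB (hS : IsPathCategory S) {P X Y Z : C} {p₁ : P ⟶ X}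
    {p₂ : P ⟶ Y} {f : X ⟶ Z} {g : Y ⟶ Z} (hf : S.Fib f) (h : IsPB p₁ p₂ f g) : S.Fib p₂ := by
  obtain ⟨P', q₁, q₂, h', hq₂⟩ := hS.pullback f g hf
  obtain ⟨φ, ⟨hφ₁, hφ₂⟩, -⟩ := h'.2 P p₁ p₂ h.1
  obtain ⟨ψ, ⟨hψ₁, hψ₂⟩, -⟩ := h.2 P' q₁ q₂ h'.1
  have : IsIso φ :=
    ⟨ψ, h.hom_ext (by simp [hφ₁, hψ₁]) (by simp [hφ₂, hψ₂]),
      h'.hom_ext (by simp [hφ₁, hψ₁]) (by simp [hφ₂, hψ₂])⟩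
  rw [← hφ₂]
  exact hS.fib_comp _ _ (hS.fib_of_iso φ this) hq₂

theorem IsRelPathObj.fib_eqv (hS : IsPathCategory S) {X I PX : C}
    {p : X ⟶ I} {r : X ⟶ PX} {s t : PX ⟶ X} (hp : S.Fib p) (h : IsRelPathObj S p r s t) :
    S.Fib s ∧ S.Fib t ∧ S.Eqv s ∧ S.Eqv t := by
  obtain ⟨hr, hrs, hrt, -, W, π₁, π₂, k, hW, hk₁, hk₂, hk⟩ := h
  refine ⟨hk₁ ▸ hS.fib_comp _ _ hk (hS.fib_of_isPB hp hW.symm),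
    hk₂ ▸ hS.fib_comp _ _ hk (hS.fib_of_isPB hp hW), ?_, ?_⟩
  · exact hS.eqv_cancel_left hr (hrs ▸ hS.eqv_id X)
  · exact hS.eqv_cancel_left hr (hrt ▸ hS.eqv_id X)

theorem IsPathCategory.exists_factorization (hS : IsPathCategory S) {A B : C} (α : A ⟶ B) :
    ∃ (M : C) (ι : A ⟶ M) (ρ : M ⟶ A) (q : M ⟶ B),
      ι ≫ ρ = 𝟙 A ∧ S.Fib ρ ∧ S.Eqv ρ ∧ S.Fib q ∧ ι ≫ q = α := by
  obtain ⟨T, hT, hTfib⟩ := hS.terminal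
  obtain ⟨τA, -⟩ := hT A
  obtain ⟨τB, -⟩ := hT B
  obtain ⟨PB, r, s, t, hpo⟩ := hS.path_obj B
  have hrel := (isPathObj_iff_isRelPathObj hT τB).1 hpo
  obtain ⟨hs, -, hs', -⟩ := hrel.fib_eqv hS (hTfib B τB)
  obtain ⟨-, hrs, hrt, -, W, π₁, π₂, k, hW, hk₁, hk₂, hk⟩ := hrel
  obtain ⟨M, mP, mA, hM, -⟩ := hS.pullback s α hs
  obtain ⟨hmA, hmA'⟩ := hS.triv_fib_pb s α mP mA hs hs' hM
  obtain ⟨ι, ⟨hι₁, hι₂⟩, -⟩ := hM.2 A (α ≫ r) (𝟙 A) (by simp [hrs])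
  -- `M → A × B` is a pullback of `k : PB → B × B`, so `mP ≫ t` is a fibration
  obtain ⟨P, pA, pB, hP, hpB⟩ := hS.pullback τA τB (hTfib A τA)
  obtain ⟨ψ, ⟨hψ₁, hψ₂⟩, -⟩ := hW.2 P (pA ≫ α) pB (hT.hom_ext _ _)
  have hψ : IsPB ψ pA π₁ α :=
    (hW.of_right hψ₁.symm (by rw [hψ₂]; exact (hT.hom_ext (α ≫ τB) τA) ▸ hP)).symm
  obtain ⟨φ, ⟨hφ₁, hφ₂⟩, -⟩ := hP.2 M mA (mP ≫ t) (hT.hom_ext _ _)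
  have hφ : IsPB mP φ k ψ := hψ.of_right
    (hW.hom_ext (by simp [hk₁, hψ₁, reassoc_of% hφ₁, hM.1])
      (by simp [hk₂, hψ₂, hφ₂]))
    (by rw [hφ₁, hk₁]; exact hM)
  refine ⟨M, ι, mA, mP ≫ t, hι₂, hmA, hmA', ?_, by rw [reassoc_of% hι₁, hrt, Category.comp_id]⟩
  rw [← hφ₂]
  exact hS.fib_comp _ _ (hS.fib_of_isPB hk hφ) hpB

theorem IsPathCategory.exists_lift (hS : IsPathCategory S) {A B E D : C} {w : A ⟶ B}
    {p : E ⟶ D} {u : A ⟶ E} {v : B ⟶ D} (hw : S.Eqv w) (hp : S.Fib p)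
    (h : u ≫ p = w ≫ v) : ∃ l : B ⟶ E, l ≫ p = v := by
  obtain ⟨P, p₁, p₂, hP, hp₂⟩ := hS.pullback p v hp
  obtain ⟨c, ⟨-, hc₂⟩, -⟩ := hP.2 A u w h
  obtain ⟨M, ι, ρ, q, hιρ, -, hρ', hq, hιq⟩ := hS.exists_factorization c
  have hqp₂ : S.Eqv (q ≫ p₂) :=
    hS.eqv_cancel_left (hS.eqv_of_section hιρ hρ') (by rwa [reassoc_of% hιq, hc₂])
  obtain ⟨σ, hσ⟩ := hS.triv_fib_sect _ (hS.fib_comp _ _ hq hp₂) hqp₂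
  exact ⟨σ ≫ q ≫ p₁, by simp only [Category.assoc, hP.1, reassoc_of% hσ]⟩

theorem IsPathCategory.exists_relPathObj (hS : IsPathCategory S) {E B : C} {p : E ⟶ B}
    (hp : S.Fib p) : ∃ (Q : C) (r : E ⟶ Q) (s t : Q ⟶ E), IsRelPathObj S p r s t := by
  obtain ⟨W, w₁, w₂, hW, -⟩ := hS.pullback p p hp
  obtain ⟨δ, ⟨hδ₁, hδ₂⟩, -⟩ := hW.2 E (𝟙 E) (𝟙 E) rfl
  obtain ⟨Q, ι, ρ, q, hιρ, -, hρ, hq, hιq⟩ := hS.exists_factorization δ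
  exact ⟨Q, ι, q ≫ w₁, q ≫ w₂, hS.eqv_of_section hιρ hρ, by rw [reassoc_of% hιq, hδ₁],
    by rw [reassoc_of% hιq, hδ₂], by simp only [Category.assoc, hW.1],
    W, w₁, w₂, q, hW, rfl, rfl, hq⟩

namespace FibHomotopic

variable {Z X I : C} {p : X ⟶ I} {u v : Z ⟶ X}

theorem comp_eq (h : FibHomotopic S p u v) : u ≫ p = v ≫ p := by
  obtain ⟨_, _, s, t, ⟨_, _, _, hst, _⟩, H, rfl, rfl⟩ := h
  simp only [Category.assoc, hst]

theorem symm (h : FibHomotopic S p u v) : FibHomotopic S p v u := by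
  obtain ⟨Q, r, s, t, ⟨hr, hrs, hrt, hst, W, π₁, π₂, k, hW, hk₁, hk₂, hk⟩, H, hHs, hHt⟩ := h
  exact ⟨Q, r, t, s, ⟨hr, hrt, hrs, hst.symm, W, π₂, π₁, k, hW.symm, hk₂, hk₁, hk⟩, H, hHt, hHs⟩

theorem precomp (h : FibHomotopic S p u v) {Z' : C} (a : Z' ⟶ Z) :
    FibHomotopic S p (a ≫ u) (a ≫ v) := by
  obtain ⟨Q, r, s, t, hQ, H, rfl, rfl⟩ := h
  exact ⟨Q, r, s, t, hQ, a ≫ H, Category.assoc _ _ _, Category.assoc _ _ _⟩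

theorem postcomp (hS : IsPathCategory S) {M B E D : C} {θ : M ⟶ B} {p : E ⟶ D}
    (hp : S.Fib p) {c : M ⟶ E} {b : B ⟶ D} (hc : c ≫ p = θ ≫ b) {x y : Z ⟶ M}
    (h : FibHomotopic S θ x y) : FibHomotopic S p (x ≫ c) (y ≫ c) := by
  obtain ⟨Qθ, rθ, sθ, tθ, ⟨hrθ, hrsθ, hrtθ, hstθ, -⟩, K, rfl, rfl⟩ := h
  obtain ⟨Q, r, s, t, hQ⟩ := hS.exists_relPathObj hp
  obtain ⟨-, hrs, hrt, -, W, w₁, w₂, k, hW, hk₁, hk₂, hk⟩ := id hQ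
  obtain ⟨ψ, ⟨hψ₁, hψ₂⟩, -⟩ := hW.2 Qθ (sθ ≫ c) (tθ ≫ c)
    (by simp only [Category.assoc, hc, reassoc_of% hstθ])
  obtain ⟨l, hl⟩ := hS.exists_lift (u := c ≫ r) (v := ψ) hrθ hk
    (hW.hom_ext (by simp [hk₁, hψ₁, hrs, reassoc_of% hrsθ])
      (by simp [hk₂, hψ₂, hrt, reassoc_of% hrtθ]))
  refine ⟨Q, r, s, t, hQ, K ≫ l, ?_, ?_⟩
  · rw [← hk₁, Category.assoc, reassoc_of% hl, hψ₁, Category.assoc]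
  · rw [← hk₂, Category.assoc, reassoc_of% hl, hψ₂, Category.assoc]

theorem trans (hS : IsPathCategory S) (hp : S.Fib p) {w : Z ⟶ X}
    (h₁ : FibHomotopic S p u v) (h₂ : FibHomotopic S p v w) : FibHomotopic S p u w := by
  obtain ⟨Q₁, r₁, s₁, t₁, ⟨hr₁, hrs₁, hrt₁, hst₁, -⟩, H₁, rfl, hH₁⟩ := h₁
  obtain ⟨Q₂, r₂, s₂, t₂, hQ₂, H₂, hH₂, rfl⟩ := h₂
  obtain ⟨hs₂, -, hs₂', -⟩ := hQ₂.fib_eqv hS hp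
  obtain ⟨-, hrs₂, hrt₂, hst₂, -⟩ := hQ₂
  -- concatenation: lift against `k` along the equivalence from `X` to the composable pairs `N`
  obtain ⟨N, n₂, n₁, hN, -⟩ := hS.pullback s₂ t₁ hs₂
  have hn₁ := (hS.triv_fib_pb s₂ t₁ n₂ n₁ hs₂ hs₂' hN).2
  obtain ⟨d, ⟨hd₂, hd₁⟩, -⟩ := hN.2 X r₂ r₁ (by rw [hrs₂, hrt₁])
  obtain ⟨Q, r, s, t, hQ⟩ := hS.exists_relPathObj hp
  obtain ⟨-, hrs, hrt, -, W, w₁, w₂, k, hW, hk₁, hk₂, hk⟩ := id hQ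
  obtain ⟨ψ, ⟨hψ₁, hψ₂⟩, -⟩ := hW.2 N (n₁ ≫ s₁) (n₂ ≫ t₂)
    (by simp only [Category.assoc, hst₁, ← hst₂, reassoc_of% hN.1])
  obtain ⟨l, hl⟩ := hS.exists_lift (u := r) (v := ψ) (hS.eqv_cancel_right hn₁ (by rwa [hd₁])) hk
    (hW.hom_ext (by simp [hk₁, hψ₁, hrs, reassoc_of% hd₁, hrs₁])
      (by simp [hk₂, hψ₂, hrt, reassoc_of% hd₂, hrt₂]))
  obtain ⟨K, ⟨hK₂, hK₁⟩, -⟩ := hN.2 Z H₂ H₁ (by rw [hH₂, hH₁])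
  refine ⟨Q, r, s, t, hQ, K ≫ l, ?_, ?_⟩
  · rw [← hk₁, Category.assoc, reassoc_of% hl, hψ₁, reassoc_of% hK₁]
  · rw [← hk₂, Category.assoc, reassoc_of% hl, hψ₂, reassoc_of% hK₂]

theorem eqv (hS : IsPathCategory S) (hp : S.Fib p) (h : FibHomotopic S p u v)
    (hu : S.Eqv u) : S.Eqv v := by
  obtain ⟨Q, r, s, t, hQ, H, rfl, rfl⟩ := h
  obtain ⟨-, -, hs, ht⟩ := hQ.fib_eqv hS hp
  exact hS.eqv_comp (hS.eqv_cancel_right hs hu) ht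

end FibHomotopic

theorem IsPathCategory.fibHomotopic_of_comp_eq (hS : IsPathCategory S) {M B V : C}
    {θ : M ⟶ B} (hθ : S.Fib θ) (hθ' : S.Eqv θ) {u v : V ⟶ M} (h : u ≫ θ = v ≫ θ) :
    FibHomotopic S θ u v := by
  obtain ⟨Q, r, s, t, hQ⟩ := hS.exists_relPathObj hθ
  obtain ⟨-, hrs, hrt, -, W, w₁, w₂, k, hW, hk₁, hk₂, hk⟩ := id hQ
  have hw₁ := (hS.triv_fib_pb θ θ w₂ w₁ hθ hθ' hW.symm).2
  obtain ⟨d, ⟨hd₁, hd₂⟩, -⟩ := hW.2 M (𝟙 M) (𝟙 M) rfl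
  obtain ⟨l, hl⟩ := hS.exists_lift (u := r) (v := 𝟙 W)
    (hS.eqv_of_section hd₁ hw₁) hk
    (hW.hom_ext (by simp [hk₁, hrs, hd₁]) (by simp [hk₂, hrt, hd₂]))
  obtain ⟨K, ⟨hK₁, hK₂⟩, -⟩ := hW.2 V u v h
  exact ⟨Q, r, s, t, hQ, K ≫ l, by rw [← hk₁, Category.assoc, reassoc_of% hl, hK₁],
    by rw [← hk₂, Category.assoc, reassoc_of% hl, hK₂]⟩

theorem IsPathCategory.exists_lift_fibHomotopic (hS : IsPathCategory S) {A B E D : C}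
    {w : A ⟶ B} {p : E ⟶ D} {u : A ⟶ E} {v : B ⟶ D} (hw : S.Eqv w) (hp : S.Fib p)
    (h : u ≫ p = w ≫ v) : ∃ l : B ⟶ E, l ≫ p = v ∧ FibHomotopic S p (w ≫ l) u := by
  obtain ⟨P, p₁, p₂, hP, hp₂⟩ := hS.pullback p v hp
  obtain ⟨c, ⟨hc₁, hc₂⟩, -⟩ := hP.2 A u w h
  obtain ⟨M, ι, ρ, q, hιρ, -, hρ', hq, hιq⟩ := hS.exists_factorization c
  have hθ : S.Fib (q ≫ p₂) := hS.fib_comp _ _ hq hp₂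
  have hθ' : S.Eqv (q ≫ p₂) :=
    hS.eqv_cancel_left (hS.eqv_of_section hιρ hρ') (by rwa [reassoc_of% hιq, hc₂])
  obtain ⟨σ, hσ⟩ := hS.triv_fib_sect _ hθ hθ'
  refine ⟨σ ≫ q ≫ p₁, by simp only [Category.assoc, hP.1, reassoc_of% hσ], ?_⟩
  have hwσ : FibHomotopic S (q ≫ p₂) (w ≫ σ) ι :=
    hS.fibHomotopic_of_comp_eq hθ hθ'
      (by rw [Category.assoc, hσ, Category.comp_id, reassoc_of% hιq, hc₂])
  simpa only [Category.assoc, reassoc_of% hιq, hc₁] using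
    hwσ.postcomp hS hp (c := q ≫ p₁) (b := v) (by simp only [Category.assoc, hP.1])

namespace Homotopic

variable {Z X : C} {u v : Z ⟶ X}

theorem precomp (h : Homotopic S u v) {Z' : C} (a : Z' ⟶ Z) :
    Homotopic S (a ≫ u) (a ≫ v) := by
  obtain ⟨Q, r, s, t, hQ, H, rfl, rfl⟩ := h
  exact ⟨Q, r, s, t, hQ, a ≫ H, Category.assoc _ _ _, Category.assoc _ _ _⟩

theorem of_fibHomotopic (hS : IsPathCategory S) {I : C} {p : X ⟶ I}
    (h : FibHomotopic S p u v) : Homotopic S u v := by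
  obtain ⟨T, hT, hTfib⟩ := hS.terminal
  obtain ⟨a, -⟩ := hT X
  obtain ⟨b, -⟩ := hT I
  rw [homotopic_iff_fibHomotopic hT a]
  simpa using h.postcomp hS (hTfib X a) (c := 𝟙 X) (b := b) (hT.hom_ext _ _)

theorem symm (hS : IsPathCategory S) (h : Homotopic S u v) : Homotopic S v u := by
  obtain ⟨T, hT, -⟩ := hS.terminal
  obtain ⟨a, -⟩ := hT X
  rw [homotopic_iff_fibHomotopic hT a] at h ⊢
  exact h.symm

theorem postcomp (hS : IsPathCategory S) (h : Homotopic S u v) {B : C} (b : X ⟶ B) :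
    Homotopic S (u ≫ b) (v ≫ b) := by
  obtain ⟨T, hT, hTfib⟩ := hS.terminal
  obtain ⟨a, -⟩ := hT X
  obtain ⟨a', -⟩ := hT B
  rw [homotopic_iff_fibHomotopic hT a] at h
  rw [homotopic_iff_fibHomotopic hT a']
  exact h.postcomp hS (hTfib B a') (b := 𝟙 T) (hT.hom_ext _ _)

theorem trans (hS : IsPathCategory S) {w : Z ⟶ X} (h₁ : Homotopic S u v)
    (h₂ : Homotopic S v w) : Homotopic S u w := by
  obtain ⟨T, hT, hTfib⟩ := hS.terminal
  obtain ⟨a, -⟩ := hT X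
  rw [homotopic_iff_fibHomotopic hT a] at h₁ h₂ ⊢
  exact h₁.trans hS (hTfib X a) h₂

theorem eqv (hS : IsPathCategory S) (h : Homotopic S u v) (hu : S.Eqv u) : S.Eqv v := by
  obtain ⟨T, hT, hTfib⟩ := hS.terminal
  obtain ⟨a, -⟩ := hT X
  rw [homotopic_iff_fibHomotopic hT a] at h
  exact h.eqv hS (hTfib X a) hu

end Homotopic

theorem IsPathCategory.exists_homotopy_retraction (hS : IsPathCategory S) {Y Z : C}
    {w : Y ⟶ Z} (hw : S.Eqv w) : ∃ l : Z ⟶ Y, Homotopic S (w ≫ l) (𝟙 Y) ∧ S.Eqv l := by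
  obtain ⟨T, hT, hTfib⟩ := hS.terminal
  obtain ⟨a, -⟩ := hT Y
  obtain ⟨b, -⟩ := hT Z
  obtain ⟨l, -, hl⟩ := hS.exists_lift_fibHomotopic (u := 𝟙 Y) (v := b) hw (hTfib Y a)
    (hT.hom_ext _ _)
  exact ⟨l, (homotopic_iff_fibHomotopic hT a).2 hl,
    hS.eqv_cancel_left hw (hl.symm.eqv hS (hTfib Y a) (hS.eqv_id Y))⟩

theorem IsPathCategory.exists_homotopy_inverse (hS : IsPathCategory S) {Y Z : C}
    {w : Y ⟶ Z} (hw : S.Eqv w) :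
    ∃ w' : Z ⟶ Y, Homotopic S (w ≫ w') (𝟙 Y) ∧ Homotopic S (w' ≫ w) (𝟙 Z) ∧ S.Eqv w' := by
  obtain ⟨l, hwl, hl⟩ := hS.exists_homotopy_retraction hw
  obtain ⟨l', hll', -⟩ := hS.exists_homotopy_retraction hl
  -- `w ≃ w ≫ l ≫ l' ≃ l'`
  have hwl' : Homotopic S w l' := by
    have h₁ := (hll'.precomp w).symm hS
    have h₂ := hwl.postcomp hS l'
    simp only [Category.comp_id, Category.assoc, Category.id_comp] at h₁ h₂
    exact h₁.trans hS h₂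
  refine ⟨l, hwl, ?_, hl⟩
  exact (hwl'.precomp l).trans hS hll'

theorem Homotopic.cancel_left (hS : IsPathCategory S) {A B X : C} {ι : A ⟶ B}
    {a b : B ⟶ X} (hι : S.Eqv ι) (h : Homotopic S (ι ≫ a) (ι ≫ b)) : Homotopic S a b := by
  obtain ⟨ι', -, hι'ι, -⟩ := hS.exists_homotopy_inverse hι
  have ha := (hι'ι.postcomp hS a).symm hS
  have hb := hι'ι.postcomp hS b
  simp only [Category.assoc, Category.id_comp] at ha hb
  exact (ha.trans hS (h.precomp ι')).trans hS hb

theorem IsPathCategory.exists_isTransport (hS : IsPathCategory S) {Y X PX Q : C}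
    {p : Y ⟶ X} (hp : S.Fib p) {r : X ⟶ PX} {s t : PX ⟶ X} (hs : S.Fib s) (hs' : S.Eqv s)
    (hrs : r ≫ s = 𝟙 X) (hrt : r ≫ t = 𝟙 X) {q₁ : Q ⟶ Y} {q₂ : Q ⟶ PX}
    (hQ : IsPB q₁ q₂ p s) : ∃ Γ : Q ⟶ Y, IsTransport S p r s t q₁ q₂ Γ := by
  have hq₁ := (hS.triv_fib_pb s p q₂ q₁ hs hs' hQ.symm).2
  obtain ⟨ι, ⟨hι₁, hι₂⟩, -⟩ := hQ.2 Y (𝟙 Y) (p ≫ r) (by simp [hrs])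
  obtain ⟨Γ, hΓ, hιΓ⟩ := hS.exists_lift_fibHomotopic (u := 𝟙 Y) (v := q₂ ≫ t)
    (hS.eqv_of_section hι₁ hq₁) hp (by simp [reassoc_of% hι₂, hrt])
  refine ⟨Γ, hΓ, fun j hj₁ hj₂ => ?_⟩
  rwa [hQ.hom_ext (hj₁.trans hι₁.symm) (hj₂.trans hι₂.symm)]

theorem IsPathCategory.exists_transport (hS : IsPathCategory S) {A Y X PX : C}
    {p : Y ⟶ X} (hp : S.Fib p) {r : X ⟶ PX} {s t : PX ⟶ X} (hpo : IsPathObj S r s t)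
    {L₀ : A ⟶ Y} {H : A ⟶ PX} (hH : H ≫ s = L₀ ≫ p) :
    ∃ L : A ⟶ Y, L ≫ p = H ≫ t ∧ Homotopic S L L₀ := by
  obtain ⟨T, hT, hTfib⟩ := hS.terminal
  obtain ⟨a, -⟩ := hT X
  have hrel := (isPathObj_iff_isRelPathObj hT a).1 hpo
  obtain ⟨hs, -, hs', -⟩ := hrel.fib_eqv hS (hTfib X a)
  obtain ⟨-, hrs, hrt, -⟩ := hrel
  obtain ⟨Q, q₁, q₂, hQ, -⟩ := hS.pullback p s hp
  obtain ⟨Γ, hΓ, hιΓ⟩ := hS.exists_isTransport hp hs hs' hrs hrt hQ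
  obtain ⟨ι, ⟨hι₁, hι₂⟩, -⟩ := hQ.2 Y (𝟙 Y) (p ≫ r) (by simp [hrs])
  have hΓq₁ : Homotopic S Γ q₁ := Homotopic.cancel_left hS
    (hS.eqv_of_section hι₁ (hS.triv_fib_pb s p q₂ q₁ hs hs' hQ.symm).2)
    (by rw [hι₁]; exact Homotopic.of_fibHomotopic hS (hιΓ ι hι₁ hι₂))
  obtain ⟨c, ⟨hc₁, hc₂⟩, -⟩ := hQ.2 A L₀ H hH.symm
  refine ⟨c ≫ Γ, by rw [Category.assoc, hΓ, reassoc_of% hc₂], ?_⟩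
  simpa only [hc₁] using hΓq₁.precomp c

theorem IsPathCategory.exists_isRelPathObj_of_isPB (hS : IsPathCategory S) {Y X Z P : C}
    {f : Y ⟶ X} (hf : S.Fib f) {m : Z ⟶ X} {p₁ : P ⟶ Y} {p₂ : P ⟶ Z} (hP : IsPB p₁ p₂ f m)
    {PY W : C} {r : Y ⟶ PY} {s t : PY ⟶ Y} {π₁ π₂ : W ⟶ Y} {k : PY ⟶ W}
    (hQ : IsRelPathObj S f r s t) (hW : IsPB π₁ π₂ f f) (hk₁ : k ≫ π₁ = s)
    (hk₂ : k ≫ π₂ = t) (hk : S.Fib k) :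
    ∃ (PP W' : C) (a : PP ⟶ PY) (r' : P ⟶ PP) (s' t' : PP ⟶ P) (b : W' ⟶ W)
      (π₁' π₂' : W' ⟶ P) (k' : PP ⟶ W'),
      IsRelPathObj S p₂ r' s' t' ∧ IsPB π₁' π₂' p₂ p₂ ∧ k' ≫ π₁' = s' ∧ k' ≫ π₂' = t' ∧
        IsPB a k' k b ∧ IsPB a s' s p₁ ∧ t' ≫ p₁ = a ≫ t := by
  obtain ⟨hs, -, hs', -⟩ := hQ.fib_eqv hS hf
  obtain ⟨-, hrs, hrt, -⟩ := hQ
  have hπ₁ : S.Fib (π₁ ≫ f) := hS.fib_comp _ _ (hS.fib_of_isPB hf hW.symm) hf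
  obtain ⟨W', b, b₂, hW', -⟩ := hS.pullback (π₁ ≫ f) m hπ₁
  obtain ⟨π₁', ⟨h₁, h₁'⟩, -⟩ := hP.2 W' (b ≫ π₁) b₂ (by rw [Category.assoc, hW'.1])
  obtain ⟨π₂', ⟨h₂, h₂'⟩, -⟩ := hP.2 W' (b ≫ π₂) b₂ (by rw [Category.assoc, ← hW.1, hW'.1])
  obtain ⟨hb, hW''⟩ := hP.fiberProduct hW hW' h₁ h₁' h₂ h₂'
  obtain ⟨PP, a, k', hPP, hk'⟩ := hS.pullback k b hk
  have has : IsPB a (k' ≫ π₁') s p₁ := hk₁ ▸ hb.paste hPP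
  have hs'' := (hS.triv_fib_pb s p₁ a _ hs hs' has).2
  obtain ⟨d, ⟨hd₁, hd₂⟩, -⟩ := hW'.2 P (p₁ ≫ r ≫ k) p₂
    (by simp only [Category.assoc, reassoc_of% hk₁, reassoc_of% hrs, hP.1])
  obtain ⟨r', ⟨hr'₁, hr'₂⟩, -⟩ := hPP.2 P (p₁ ≫ r) d (by rw [hd₁, Category.assoc])
  have hr's' : r' ≫ k' ≫ π₁' = 𝟙 P := hP.hom_ext
    (by simp [reassoc_of% hr'₂, reassoc_of% hd₁, h₁, hk₁, hrs])
    (by simp [reassoc_of% hr'₂, h₁', hd₂])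
  have hr't' : r' ≫ k' ≫ π₂' = 𝟙 P := hP.hom_ext
    (by simp [reassoc_of% hr'₂, reassoc_of% hd₁, h₂, hk₂, hrt])
    (by simp [reassoc_of% hr'₂, h₂', hd₂])
  refine ⟨PP, W', a, r', k' ≫ π₁', k' ≫ π₂', b, π₁', π₂', k',
    ⟨hS.eqv_of_section hr's' hs'', hr's', hr't', by simp only [Category.assoc, h₁', h₂'],
      W', π₁', π₂', k', hW'', rfl, rfl, hk'⟩, hW'', rfl, rfl, hPP, has, ?_⟩
  rw [Category.assoc, h₂, ← reassoc_of% hPP.1, hk₂]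

theorem FibHomotopic.of_isPB (hS : IsPathCategory S) {Y X Z P V : C} {f : Y ⟶ X}
    (hf : S.Fib f) {m : Z ⟶ X} {p₁ : P ⟶ Y} {p₂ : P ⟶ Z} (hP : IsPB p₁ p₂ f m)
    {u v : V ⟶ P} (h₂ : u ≫ p₂ = v ≫ p₂) (h₁ : FibHomotopic S f (u ≫ p₁) (v ≫ p₁)) :
    FibHomotopic S p₂ u v := by
  obtain ⟨Q, r, s, t, hQ, K, hKs, hKt⟩ := h₁
  obtain ⟨-, -, -, -, W, π₁, π₂, k, hW, hk₁, hk₂, hk⟩ := id hQ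
  obtain ⟨PP, W', a, r', s', t', -, -, -, -, hQ', -, -, -, -, has, hat⟩ :=
    hS.exists_isRelPathObj_of_isPB hf hP hQ hW hk₁ hk₂ hk
  obtain ⟨H, ⟨hHa, hHs⟩, -⟩ := has.2 V K u hKs
  refine ⟨PP, r', s', t', hQ', H, hHs, hP.hom_ext ?_ ?_⟩
  · rw [Category.assoc, hat, reassoc_of% hHa, hKt]
  · rw [Category.assoc, ← hQ'.2.2.2.1, reassoc_of% hHs, h₂]

theorem IsNTypeFib.fib {n : ℕ} {Y X : C} {f : Y ⟶ X} (h : IsNTypeFib S n f) : S.Fib f := by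
  cases n <;> exact h.1

theorem IsNTypeFib.of_isPB (hS : IsPathCategory S) {n : ℕ} {Y X P Z : C} {f : Y ⟶ X}
    {m : Z ⟶ X} {p₁ : P ⟶ Y} {p₂ : P ⟶ Z} (hf : IsNTypeFib S n f) (hP : IsPB p₁ p₂ f m) :
    IsNTypeFib S n p₂ := by
  induction n generalizing Y X P Z with
  | zero => exact ⟨hS.fib_of_isPB hf.1 hP, (hS.triv_fib_pb f m p₁ p₂ hf.1 hf.2 hP).2⟩
  | succ n ih =>
    obtain ⟨hf', PY, W, r, s, t, π₁, π₂, k, hQ, hW, hk₁, hk₂, hk⟩ := hf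
    obtain ⟨PP, W', a, r', s', t', b, π₁', π₂', k', hQ', hW', hk₁', hk₂', hPP, -⟩ :=
      hS.exists_isRelPathObj_of_isPB hf' hP hQ hW hk₁ hk₂ hk.fib
    exact ⟨hS.fib_of_isPB hf' hP, PP, W', r', s', t', π₁', π₂', k', hQ', hW', hk₁', hk₂',
      ih hk hPP⟩

/-- A section of a trivial fibration is a strong deformation retract (a homotopy over `k` is
one relative to the endpoints). -/
theorem IsPathCategory.exists_deformation (hS : IsPathCategory S) {A M PM W : C}
    {ι : A ⟶ M} {ρ : M ⟶ A} (hιρ : ι ≫ ρ = 𝟙 A) (hρ : S.Eqv ρ) {r : M ⟶ PM}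
    {s t : PM ⟶ M} (hrs : r ≫ s = 𝟙 M) (hrt : r ≫ t = 𝟙 M) {w₁ w₂ : W ⟶ M} {k : PM ⟶ W}
    (hW : IsPB w₁ w₂ ρ ρ) (hk₁ : k ≫ w₁ = s) (hk₂ : k ≫ w₂ = t) (hk : S.Fib k) :
    ∃ K : M ⟶ PM, K ≫ s = 𝟙 M ∧ K ≫ t = ρ ≫ ι ∧ FibHomotopic S k (ι ≫ K) (ι ≫ r) := by
  obtain ⟨v, ⟨hv₁, hv₂⟩, -⟩ := hW.2 M (𝟙 M) (ρ ≫ ι) (by simp [hιρ])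
  obtain ⟨K, hK, hιK⟩ := hS.exists_lift_fibHomotopic (u := ι ≫ r) (v := v)
    (hS.eqv_of_section hιρ hρ) hk
    (hW.hom_ext (by simp [hk₁, hrs, hv₁]) (by simp [hk₂, hrt, hv₂, reassoc_of% hιρ]))
  exact ⟨K, by rw [← hk₁, reassoc_of% hK, hv₁], by rw [← hk₂, reassoc_of% hK, hv₂], hιK⟩

/-- Transport along homotopic paths, relative to their endpoints, gives fibrewise
homotopic results. -/
theorem FibHomotopic.transport (hS : IsPathCategory S) {T M PM W Q V : C} {q : T ⟶ M}
    (hq : S.Fib q) {k : PM ⟶ W} (hk : S.Fib k) {w₁ w₂ : W ⟶ M} (hw₁ : S.Fib w₁)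
    {π : Q ⟶ PM} {ε : Q ⟶ T} (hQ : IsPB π ε (k ≫ w₁) q) {Γ : Q ⟶ T}
    (hΓ : Γ ≫ q = π ≫ k ≫ w₂) {x y : V ⟶ Q} (hε : x ≫ ε = y ≫ ε)
    (h : FibHomotopic S k (x ≫ π) (y ≫ π)) : FibHomotopic S q (x ≫ Γ) (y ≫ Γ) := by
  obtain ⟨W', c₁, c₂, hW', -⟩ := hS.pullback w₁ q hw₁
  obtain ⟨j, ⟨hj₁, hj₂⟩, -⟩ := hW'.2 Q (π ≫ k) ε (by rw [Category.assoc, hQ.1])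
  have hj : IsPB π j k c₁ := hW'.of_right hj₁.symm (by rwa [hj₂])
  have hxy : FibHomotopic S j x y := FibHomotopic.of_isPB hS hk hj
    (hW'.hom_ext (by simpa only [Category.assoc, hj₁] using h.comp_eq)
      (by simpa only [Category.assoc, hj₂] using hε)) h
  exact hxy.postcomp hS hq (b := c₁ ≫ w₂) (by rw [hΓ, reassoc_of% hj₁])

/-- `Γ` is transport along the deformation from `𝟙 M` to `ρ ≫ ι`; over `A` the deformation
is constant up to homotopy rel endpoints, so there `Γ` is homotopic to the identity. -/
theorem IsPathCategory.exists_retraction_transport (hS : IsPathCategory S) {A M T F : C}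
    {ι : A ⟶ M} {ρ : M ⟶ A} (hιρ : ι ≫ ρ = 𝟙 A) (hρ : S.Fib ρ) (hρ' : S.Eqv ρ)
    {q : T ⟶ M} (hq : S.Fib q) {σA : F ⟶ A} {σT : F ⟶ T} (hP : IsPB σA σT ι q) :
    ∃ Γ : T ⟶ T, Γ ≫ q = q ≫ ρ ≫ ι ∧ S.Eqv Γ ∧ FibHomotopic S q (σT ≫ Γ) σT := by
  obtain ⟨PM, r, s, t, hPM⟩ := hS.exists_relPathObj hρ
  obtain ⟨hs, -, hs', -⟩ := hPM.fib_eqv hS hρ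
  obtain ⟨-, hrs, hrt, -, W, w₁, w₂, k, hW, hk₁, hk₂, hk⟩ := hPM
  obtain ⟨K, hKs, hKt, hιK⟩ := hS.exists_deformation hιρ hρ' hrs hrt hW hk₁ hk₂ hk
  obtain ⟨Q, π, ε, hQ, -⟩ := hS.pullback s q hs
  have hε := (hS.triv_fib_pb s q π ε hs hs' hQ).2
  obtain ⟨Γ, hΓ, hΓι⟩ := hS.exists_isTransport hq hs hs' hrs hrt hQ.symm
  obtain ⟨ι₂, ⟨hι₂π, hι₂ε⟩, -⟩ := hQ.2 T (q ≫ r) (𝟙 T) (by simp [hrs])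
  obtain ⟨b, ⟨hbπ, hbε⟩, -⟩ := hQ.2 T (q ≫ K) (𝟙 T) (by simp [hKs])
  have hι₂Γ : FibHomotopic S q (ι₂ ≫ Γ) (𝟙 T) := hΓι ι₂ hι₂ε hι₂π
  have hΓ' : S.Eqv Γ := hS.eqv_cancel_left (hS.eqv_of_section hι₂ε hε)
    (hι₂Γ.symm.eqv hS hq (hS.eqv_id T))
  refine ⟨b ≫ Γ, by rw [Category.assoc, hΓ, reassoc_of% hbπ, hKt],
    hS.eqv_comp (hS.eqv_of_section hbε hε) hΓ', ?_⟩
  have hbι₂ : FibHomotopic S q (σT ≫ b ≫ Γ) (σT ≫ ι₂ ≫ Γ) := by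
    simpa only [Category.assoc] using FibHomotopic.transport hS hq hk
      (hS.fib_of_isPB hρ hW.symm) (hk₁ ▸ hQ) (hk₂ ▸ hΓ) (x := σT ≫ b) (y := σT ≫ ι₂)
      (by simp [hbε, hι₂ε])
      (by simpa only [Category.assoc, hbπ, hι₂π, reassoc_of% hP.1] using hιK.precomp σA)
  simpa using hbι₂.trans hS hq (hι₂Γ.precomp σT)

theorem IsPathCategory.eqv_of_isPB_section (hS : IsPathCategory S) {A M T F : C}
    {ι : A ⟶ M} {ρ : M ⟶ A} (hιρ : ι ≫ ρ = 𝟙 A) (hρ : S.Fib ρ) (hρ' : S.Eqv ρ)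
    {q : T ⟶ M} (hq : S.Fib q) {σA : F ⟶ A} {σT : F ⟶ T} (hP : IsPB σA σT ι q) :
    S.Eqv σT := by
  obtain ⟨Γ, hΓ, hΓ', hσΓ⟩ := hS.exists_retraction_transport hιρ hρ hρ' hq hP
  obtain ⟨η, ⟨hηA, hηT⟩, -⟩ := hP.2 T (q ≫ ρ) Γ (by rw [hΓ, Category.assoc])
  have hση : Homotopic S (σT ≫ η) (𝟙 F) := Homotopic.of_fibHomotopic hS
    (FibHomotopic.of_isPB hS hq hP.symm (by rw [Category.assoc, hηA, ← reassoc_of% hP.1,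
      hιρ, Category.comp_id, Category.id_comp]) (by simpa [hηT] using hσΓ))
  exact (hS.two_out_of_six σT η σT (hση.symm hS |>.eqv hS (hS.eqv_id F))
    (by rwa [hηT])).1

theorem IsPathCategory.eqv_of_isPB (hS : IsPathCategory S) {A B T F : C} {e : A ⟶ B}
    (he : S.Eqv e) {q : T ⟶ B} (hq : S.Fib q) {σA : F ⟶ A} {σT : F ⟶ T}
    (hP : IsPB σA σT e q) : S.Eqv σT := by
  obtain ⟨M, ι, ρ, e', hιρ, hρ, hρ', he', hιe'⟩ := hS.exists_factorization e
  have he'' : S.Eqv e' := hS.eqv_cancel_left (hS.eqv_of_section hιρ hρ') (by rwa [hιe'])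
  obtain ⟨F', m₁, m₂, hF', -⟩ := hS.pullback e' q he'
  have hm₂ := (hS.triv_fib_pb e' q m₁ m₂ he' he'' hF').2
  obtain ⟨j, ⟨hj₁, hj₂⟩, -⟩ := hF'.2 F (σA ≫ ι) σT (by rw [Category.assoc, hιe', hP.1])
  have hj : IsPB σA j ι m₁ := hF'.of_right hj₁.symm (by rw [hj₂, hιe']; exact hP)
  rw [← hj₂]
  exact hS.eqv_comp (hS.eqv_of_isPB_section hιρ hρ hρ' (hS.fib_of_isPB hq hF'.symm) hj) hm₂

/-- `φ` factors as two pullbacks of `e` along fibrations. -/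
theorem IsPathCategory.eqv_of_isPB_fiberSquares (hS : IsPathCategory S) {D P X Wg Wp : C}
    {e : D ⟶ P} (he : S.Eqv e) {p : P ⟶ X} (hp : S.Fib p) (hg : S.Fib (e ≫ p))
    {c₁ c₂ : Wg ⟶ D} (hWg : IsPB c₁ c₂ (e ≫ p) (e ≫ p)) {π₁ π₂ : Wp ⟶ P}
    (hWp : IsPB π₁ π₂ p p) {φ : Wg ⟶ Wp} (hφ₁ : φ ≫ π₁ = c₁ ≫ e) (hφ₂ : φ ≫ π₂ = c₂ ≫ e) :
    S.Eqv φ := by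
  obtain ⟨V, u₁, u₂, hV, -⟩ := hS.pullback p (e ≫ p) hp
  obtain ⟨φ₁, ⟨hφ₁₁, hφ₁₂⟩, -⟩ := hV.2 Wg (c₁ ≫ e) c₂ (by rw [Category.assoc, hWg.1])
  obtain ⟨φ₂, ⟨hφ₂₁, hφ₂₂⟩, -⟩ := hWp.2 V u₁ (u₂ ≫ e) (by rw [Category.assoc, hV.1])
  have h₁ : IsPB c₁ φ₁ e u₁ := hV.of_right hφ₁₁.symm (by rwa [hφ₁₂])
  have h₂ : IsPB u₂ φ₂ e π₂ := hWp.symm.of_right hφ₂₂.symm (by rw [hφ₂₁]; exact hV.symm)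
  rw [hWp.hom_ext (a := φ) (b := φ₁ ≫ φ₂) (by rw [hφ₁, Category.assoc, hφ₂₁, hφ₁₁])
    (by rw [hφ₂, Category.assoc, hφ₂₂, reassoc_of% hφ₁₂])]
  exact hS.eqv_comp (hS.eqv_of_isPB he (hS.fib_of_isPB hg hV.symm) h₁)
    (hS.eqv_of_isPB he (hS.fib_of_isPB hp hWp) h₂)

theorem IsNTypeFib.eqv_comp (hS : IsPathCategory S) {n : ℕ} {D P X : C} {e : D ⟶ P}
    {p : P ⟶ X} (he : S.Eqv e) (hg : S.Fib (e ≫ p)) (hp : IsNTypeFib S n p) :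
    IsNTypeFib S n (e ≫ p) := by
  induction n generalizing D P X with
  | zero => exact ⟨hg, hS.eqv_comp he hp.2⟩
  | succ n ih =>
    obtain ⟨hp', Qp, Wp, rp, sp, tp, π₁, π₂, kp, hQp, hWp, hkp₁, hkp₂, hkp⟩ := hp
    obtain ⟨-, -, hsp, -⟩ := hQp.fib_eqv hS hp'
    obtain ⟨-, hrsp, hrtp, -⟩ := hQp
    obtain ⟨Qg, rg, sg, tg, hQg⟩ := hS.exists_relPathObj hg
    obtain ⟨-, -, hsg, -⟩ := hQg.fib_eqv hS hg
    obtain ⟨hrg, hrsg, hrtg, -, Wg, c₁, c₂, kg, hWg, hkg₁, hkg₂, hkg⟩ := id hQg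
    obtain ⟨φ, ⟨hφ₁, hφ₂⟩, -⟩ := hWp.2 Wg (c₁ ≫ e) (c₂ ≫ e) (by simpa using hWg.1)
    have hφ := hS.eqv_of_isPB_fiberSquares he hp' hg hWg hWp hφ₁ hφ₂
    obtain ⟨P₁, a, k₁, hP₁, -⟩ := hS.pullback kp φ hkp.fib
    obtain ⟨l, hl⟩ := hS.exists_lift (u := e ≫ rp) (v := kg ≫ φ) hrg hkp.fib
      (hWp.hom_ext (by simp [hkp₁, hφ₁, hrsp, reassoc_of% hkg₁, reassoc_of% hrsg])
        (by simp [hkp₂, hφ₂, hrtp, reassoc_of% hkg₂, reassoc_of% hrtg]))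
    obtain ⟨c, ⟨hca, hck⟩, -⟩ := hP₁.2 Qg l kg hl
    have hk₁c₁ : S.Eqv (k₁ ≫ c₁) := by
      refine hS.eqv_cancel_right he ?_
      rw [Category.assoc, ← hφ₁, ← reassoc_of% hP₁.1, hkp₁]
      exact hS.eqv_comp (hS.eqv_of_isPB hφ hkp.fib hP₁.symm) hsp
    have hc : S.Eqv c := hS.eqv_cancel_right hk₁c₁ (by rwa [reassoc_of% hck, hkg₁])
    have hkg' := ih hc (hck ▸ hkg) (hkp.of_isPB hS hP₁)
    rw [hck] at hkg'
    exact ⟨hg, Qg, Wg, rg, sg, tg, c₁, c₂, kg, hQg, hWg, hkg₁, hkg₂, hkg'⟩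

namespace IsNTypeFib

variable {n : ℕ} {Y X Z : C} {f : Y ⟶ X}

theorem of_eqv_comp_homotopic (hS : IsPathCategory S) (hf : IsNTypeFib S n f)
    {w : Z ⟶ Y} {g : Z ⟶ X} (hw : S.Eqv w) (hg : S.Fib g) (h : Homotopic S (w ≫ f) g) :
    IsNTypeFib S n g := by
  obtain ⟨PX, r, s, t, hpo, H, hHs, hHt⟩ := h
  obtain ⟨L, hLf, hLw⟩ := hS.exists_transport hf.fib hpo hHs
  rw [hHt] at hLf
  rw [← hLf] at hg ⊢
  exact hf.eqv_comp hS (hLw.symm hS |>.eqv hS hw) hg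

theorem of_homotopic_eqv_comp (hS : IsPathCategory S) (hf : IsNTypeFib S n f)
    {w : Y ⟶ Z} {g : Z ⟶ X} (hw : S.Eqv w) (hg : S.Fib g) (h : Homotopic S f (w ≫ g)) :
    IsNTypeFib S n g := by
  obtain ⟨w', -, hw'w, hw'⟩ := hS.exists_homotopy_inverse hw
  have hg' := hw'w.postcomp hS g
  simp only [Category.assoc, Category.id_comp] at hg'
  exact hf.of_eqv_comp_homotopic hS hw' hg ((h.precomp w').trans hS hg')

theorem of_comp_eqv_homotopic (hS : IsPathCategory S) (hf : IsNTypeFib S n f)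
    {w : X ⟶ Z} {g : Y ⟶ Z} (hw : S.Eqv w) (hg : S.Fib g) (h : Homotopic S (f ≫ w) g) :
    IsNTypeFib S n g := by
  obtain ⟨w', hww', -, hw'⟩ := hS.exists_homotopy_inverse hw
  -- transport `𝟙 Y` along `f ≃ f ≫ w ≫ w' ≃ g ≫ w'`, then compare with the pullback of `f`
  -- along `w'`
  have hfg : Homotopic S f (g ≫ w') := by
    have h₁ := (hww'.precomp f).symm hS
    have h₂ := h.postcomp hS w'
    simp only [Category.comp_id, Category.assoc] at h₁ h₂
    exact h₁.trans hS h₂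
  obtain ⟨PX, r, s, t, hpo, H, hHs, hHt⟩ := hfg
  obtain ⟨L, hLf, hL⟩ := hS.exists_transport (L₀ := 𝟙 Y) hf.fib hpo (by simpa using hHs)
  obtain ⟨F, a, b, hF, -⟩ := hS.pullback f w' hf.fib
  obtain ⟨ξ, ⟨hξa, hξb⟩, -⟩ := hF.2 Y L g (by rw [hLf, hHt])
  have hξ : S.Eqv ξ := hS.eqv_cancel_right (hS.eqv_of_isPB hw' hf.fib hF.symm)
    (by rw [hξa]; exact hL.symm hS |>.eqv hS (hS.eqv_id Y))
  rw [← hξb] at hg ⊢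
  exact (hf.of_isPB hS hF).eqv_comp hS hξ hg

theorem of_homotopic_comp_eqv (hS : IsPathCategory S) (hf : IsNTypeFib S n f)
    {g : Y ⟶ Z} {w : Z ⟶ X} (hw : S.Eqv w) (hg : S.Fib g) (h : Homotopic S f (g ≫ w)) :
    IsNTypeFib S n g := by
  obtain ⟨w', hww', -, hw'⟩ := hS.exists_homotopy_inverse hw
  have h₁ := h.postcomp hS w'
  have h₂ := hww'.precomp g
  simp only [Category.comp_id, Category.assoc] at h₁ h₂
  exact hf.of_comp_eqv_homotopic hS hw' hg (h₁.trans hS h₂)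

end IsNTypeFib

/-- In a path category, let `f : Y ⟶ X` be a fibration of
`(n-2)`-types.  Then: (1) any fibration obtained by pulling back `f` along some map
is again one; (2) if `w` is an equivalence and `g` a fibration with `f ≃ g ∘ w` or
`f ∘ w ≃ g`, then `g` is one; (3) if `w` is an equivalence and `g` a fibration with
`f ≃ w ∘ g` or `w ∘ f ≃ g`, then `g` is one. -/
theorem ntype_fibrations_invariance {C : Type u} [Category.{v} C]
    (S : PathStruct C) (hS : IsPathCategory S)
    (n : ℕ) {Y X : C} (f : Y ⟶ X) (hf : IsNTypeFib S n f) :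
    (∀ {P Z : C} (m : Z ⟶ X) (p₁ : P ⟶ Y) (p₂ : P ⟶ Z),
      IsPB p₁ p₂ f m → IsNTypeFib S n p₂) ∧
    (∀ {Z : C} (w : Y ⟶ Z) (g : Z ⟶ X), S.Eqv w → S.Fib g →
      Homotopic S f (w ≫ g) → IsNTypeFib S n g) ∧
    (∀ {Z : C} (w : Z ⟶ Y) (g : Z ⟶ X), S.Eqv w → S.Fib g →
      Homotopic S (w ≫ f) g → IsNTypeFib S n g) ∧
    (∀ {Z : C} (g : Y ⟶ Z) (w : Z ⟶ X), S.Eqv w → S.Fib g →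
      Homotopic S f (g ≫ w) → IsNTypeFib S n g) ∧
    (∀ {Z : C} (w : X ⟶ Z) (g : Y ⟶ Z), S.Eqv w → S.Fib g →
      Homotopic S (f ≫ w) g → IsNTypeFib S n g) :=
  ⟨fun _ _ _ hP => hf.of_isPB hS hP,
    fun _ _ hw hg h => hf.of_homotopic_eqv_comp hS hw hg h,
    fun _ _ hw hg h => hf.of_eqv_comp_homotopic hS hw hg h,
    fun _ _ hw hg h => hf.of_homotopic_comp_eqv hS hw hg h,
    fun _ _ hw hg h => hf.of_comp_eqv_homotopic hS hw hg h⟩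

end EffPaper
end

section
/- In EFF₁, a fibration f: B → A is trivial (a fibration that is an equivalence) if and only if f has a section s: A → B for which there exist a homotopy H: 1_B ≃ sf and a 2-homotopy M: fH ∼ 1_f. -/
namespace EffPaper

/-! ### A small kit for tracking by partial computable functions.

We encode "partial computable function" via Mathlib's `Partrec` on `ℕ →. ℕ`.
`CompComputes I O` says: there is a partial computable function which, on the input
`I x`, converges and outputs `O x` (for every `x` in some index type `X`).
`CompFinds I S` says: there is a partial computable function which, on the input
`I x`, converges and outputs some element of the set `S x`. -/

def CompComputes {X : Sort*} (I O : X → ℕ) : Prop :=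
  ∃ F : ℕ →. ℕ, Partrec F ∧ ∀ x, O x ∈ F (I x)

def CompFinds {X : Sort*} (I : X → ℕ) (S : X → Set ℕ) : Prop :=
  ∃ F : ℕ →. ℕ, Partrec F ∧ ∀ x, ∃ k, k ∈ F (I x) ∧ k ∈ S x

namespace CompComputes

protected theorem id {X : Sort*} (I : X → ℕ) : CompComputes I I :=
  ⟨fun n => Part.some n, Partrec.some, fun x => Part.mem_some _⟩

protected theorem const {X : Sort*} (I : X → ℕ) (c : ℕ) : CompComputes I fun _ => c :=
  ⟨fun _ => Part.some c, (Computable.const c).partrec, fun _ => Part.mem_some _⟩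

protected theorem comp {X : Sort*} {I M O : X → ℕ}
    (h₂ : CompComputes M O) (h₁ : CompComputes I M) : CompComputes I O := by
  obtain ⟨F₁, pF₁, s₁⟩ := h₁
  obtain ⟨F₂, pF₂, s₂⟩ := h₂
  refine ⟨fun n => (F₁ n).bind F₂, pF₁.bind (pF₂.comp Computable.snd), fun x => ?_⟩
  exact Part.mem_bind_iff.mpr ⟨M x, s₁ x, s₂ x⟩

protected theorem pair {X : Sort*} {I a b : X → ℕ}
    (ha : CompComputes I a) (hb : CompComputes I b) :
    CompComputes I (fun x => Nat.pair (a x) (b x)) := by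
  obtain ⟨F₁, pF₁, s₁⟩ := ha
  obtain ⟨F₂, pF₂, s₂⟩ := hb
  refine ⟨fun n => (F₁ n).bind fun u => (F₂ n).map fun v => Nat.pair u v, ?_, fun x => ?_⟩
  · refine pF₁.bind ?_
    have : Computable₂ fun (p : ℕ × ℕ) (v : ℕ) => Nat.pair p.2 v :=
      Primrec₂.to_comp (Primrec₂.natPair.comp (Primrec.snd.comp Primrec.fst) Primrec.snd)
    exact Partrec.map (pF₂.comp Computable.fst) this
  · exact Part.mem_bind_iff.mpr ⟨a x, s₁ x, (Part.mem_map_iff _).mpr ⟨b x, s₂ x, rfl⟩⟩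

protected theorem unpairL {X : Sort*} (I : X → ℕ) :
    CompComputes I (fun x => (I x).unpair.1) :=
  ⟨fun n => Part.some n.unpair.1,
    (Primrec.to_comp (Primrec.fst.comp Primrec.unpair)).partrec, fun _ => Part.mem_some _⟩

protected theorem unpairR {X : Sort*} (I : X → ℕ) :
    CompComputes I (fun x => (I x).unpair.2) :=
  ⟨fun n => Part.some n.unpair.2,
    (Primrec.to_comp (Primrec.snd.comp Primrec.unpair)).partrec, fun _ => Part.mem_some _⟩

protected theorem projL {X : Sort*} (a b : X → ℕ) :
    CompComputes (fun x => Nat.pair (a x) (b x)) a := by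
  have := CompComputes.unpairL (X := X) (fun x => Nat.pair (a x) (b x))
  simpa [Nat.unpair_pair] using this

protected theorem projR {X : Sort*} (a b : X → ℕ) :
    CompComputes (fun x => Nat.pair (a x) (b x)) b := by
  have := CompComputes.unpairR (X := X) (fun x => Nat.pair (a x) (b x))
  simpa [Nat.unpair_pair] using this

protected theorem precomp {X Y : Sort*} {I O : X → ℕ} (h : CompComputes I O) (e : Y → X) :
    CompComputes (fun y => I (e y)) (fun y => O (e y)) := by
  obtain ⟨F, pF, s⟩ := h
  exact ⟨F, pF, fun y => s (e y)⟩

protected theorem toFinds {X : Sort*} {I o : X → ℕ} {S : X → Set ℕ}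
    (h : CompComputes I o) (hm : ∀ x, o x ∈ S x) : CompFinds I S := by
  obtain ⟨F, pF, s⟩ := h
  exact ⟨F, pF, fun x => ⟨o x, s x, hm x⟩⟩


protected theorem congr {X : Sort*} {I O O' : X → ℕ}
    (h : CompComputes I O) (he : ∀ x, O x = O' x) : CompComputes I O' := by
  obtain ⟨F, pF, s⟩ := h
  exact ⟨F, pF, fun x => he x ▸ s x⟩


/-- Values tracked by a partial computable function are determined by the input. -/
protected theorem determined {X : Sort*} {I O : X → ℕ} (h : CompComputes I O)
    {x y : X} (hxy : I x = I y) : O x = O y := by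
  obtain ⟨F, pF, s⟩ := h
  exact Part.mem_unique (s x) (hxy ▸ s y)

end CompComputes

namespace CompFinds

protected theorem toComputes {X : Sort*} {I : X → ℕ} {S : X → Set ℕ} (h : CompFinds I S) :
    ∃ o : X → ℕ, (∀ x, o x ∈ S x) ∧ CompComputes I o := by
  obtain ⟨F, pF, s⟩ := h
  refine ⟨fun x => (s x).choose, fun x => (s x).choose_spec.2, F, pF, fun x => (s x).choose_spec.1⟩

/-- Reindex a `CompFinds` along `e` and chase the input through a computable function. -/
protected theorem via {Y X : Sort*} {J : X → ℕ} {S : X → Set ℕ} (h : CompFinds J S)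
    {I : Y → ℕ} (e : Y → X) (hc : CompComputes I (fun y => J (e y))) :
    CompFinds I (fun y => S (e y)) := by
  obtain ⟨o, hm, hcc⟩ := h.toComputes
  exact CompComputes.toFinds ((hcc.precomp e).comp hc) (fun y => hm (e y))

end CompFinds

end EffPaper

namespace EffPaper
open CategoryTheory

/-! ### The category `EFF₁`. -/

/-- An object of `EFF₁`: a set `A` with realizers `α : A → ℕ`, sets of 1-cells
`hom a a' ⊆ ℕ` and sets of 2-cells `hom2 a a' π π' ⊆ ℕ` for parallel 1-cells
`π, π' ∈ hom a a'`, together with effective identity, inverse and composition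
operations on 1-cells, computable structural 2-cells (unitors, inverse laws,
associators) and computable identity, vertical composition, inverse and horizontal
composition operations on 2-cells. -/
structure Eff1Obj : Type 1 where
  A : Type
  α : A → ℕ
  hom : A → A → Set ℕ
  hom2 : A → A → ℕ → ℕ → Set ℕ
  -- effective operations on 1-cells
  id1 : ∀ a : A, {n : ℕ // n ∈ hom a a}
  inv1 : ∀ a a' : A, {n : ℕ // n ∈ hom a a'} → {n : ℕ // n ∈ hom a' a}
  comp1 : ∀ a a' a'' : A,
    {n : ℕ // n ∈ hom a a'} → {n : ℕ // n ∈ hom a' a''} → {n : ℕ // n ∈ hom a a''}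
  tr_id1 : CompComputes (fun a : A => α a) (fun a => (id1 a).val)
  tr_inv1 : CompComputes
    (fun q : {p : A × A × ℕ // p.2.2 ∈ hom p.1 p.2.1} =>
      Nat.pair (α q.1.1) (Nat.pair (α q.1.2.1) q.1.2.2))
    (fun q => (inv1 q.1.1 q.1.2.1 ⟨q.1.2.2, q.2⟩).val)
  tr_comp1 : CompComputes
    (fun q : {p : A × A × A × ℕ × ℕ //
        p.2.2.2.1 ∈ hom p.1 p.2.1 ∧ p.2.2.2.2 ∈ hom p.2.1 p.2.2.1} =>
      Nat.pair (α q.1.1) (Nat.pair (α q.1.2.1) (Nat.pair (α q.1.2.2.1)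
        (Nat.pair q.1.2.2.2.1 q.1.2.2.2.2))))
    (fun q => (comp1 q.1.1 q.1.2.1 q.1.2.2.1 ⟨q.1.2.2.2.1, q.2.1⟩ ⟨q.1.2.2.2.2, q.2.2⟩).val)
  -- computable structural 2-cells `1 ∘ π ⇒ π`, `π ∘ 1 ⇒ π`, `π⁻¹ ∘ π ⇒ 1`,
  -- `π ∘ π⁻¹ ⇒ 1`, `(σ ∘ ρ) ∘ π ⇒ σ ∘ (ρ ∘ π)`
  lunit : CompFinds
    (fun q : {p : A × A × ℕ // p.2.2 ∈ hom p.1 p.2.1} =>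
      Nat.pair (α q.1.1) (Nat.pair (α q.1.2.1) q.1.2.2))
    (fun q => hom2 q.1.1 q.1.2.1
      (comp1 q.1.1 q.1.2.1 q.1.2.1 ⟨q.1.2.2, q.2⟩ (id1 q.1.2.1)).val q.1.2.2)
  runit : CompFinds
    (fun q : {p : A × A × ℕ // p.2.2 ∈ hom p.1 p.2.1} =>
      Nat.pair (α q.1.1) (Nat.pair (α q.1.2.1) q.1.2.2))
    (fun q => hom2 q.1.1 q.1.2.1
      (comp1 q.1.1 q.1.1 q.1.2.1 (id1 q.1.1) ⟨q.1.2.2, q.2⟩).val q.1.2.2)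
  linv : CompFinds
    (fun q : {p : A × A × ℕ // p.2.2 ∈ hom p.1 p.2.1} =>
      Nat.pair (α q.1.1) (Nat.pair (α q.1.2.1) q.1.2.2))
    (fun q => hom2 q.1.1 q.1.1
      (comp1 q.1.1 q.1.2.1 q.1.1 ⟨q.1.2.2, q.2⟩ (inv1 q.1.1 q.1.2.1 ⟨q.1.2.2, q.2⟩)).val
      (id1 q.1.1).val)
  rinv : CompFinds
    (fun q : {p : A × A × ℕ // p.2.2 ∈ hom p.1 p.2.1} =>
      Nat.pair (α q.1.1) (Nat.pair (α q.1.2.1) q.1.2.2))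
    (fun q => hom2 q.1.2.1 q.1.2.1
      (comp1 q.1.2.1 q.1.1 q.1.2.1 (inv1 q.1.1 q.1.2.1 ⟨q.1.2.2, q.2⟩) ⟨q.1.2.2, q.2⟩).val
      (id1 q.1.2.1).val)
  assoc2 : CompFinds
    (fun q : {p : A × A × A × A × ℕ × ℕ × ℕ //
        p.2.2.2.2.1 ∈ hom p.1 p.2.1 ∧ p.2.2.2.2.2.1 ∈ hom p.2.1 p.2.2.1 ∧
        p.2.2.2.2.2.2 ∈ hom p.2.2.1 p.2.2.2.1} =>
      Nat.pair (α q.1.1) (Nat.pair (α q.1.2.1) (Nat.pair (α q.1.2.2.1)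
        (Nat.pair (α q.1.2.2.2.1) (Nat.pair q.1.2.2.2.2.1
          (Nat.pair q.1.2.2.2.2.2.1 q.1.2.2.2.2.2.2))))))
    (fun q => hom2 q.1.1 q.1.2.2.2.1
      (comp1 q.1.1 q.1.2.2.1 q.1.2.2.2.1
        (comp1 q.1.1 q.1.2.1 q.1.2.2.1 ⟨q.1.2.2.2.2.1, q.2.1⟩ ⟨q.1.2.2.2.2.2.1, q.2.2.1⟩)
        ⟨q.1.2.2.2.2.2.2, q.2.2.2⟩).val
      (comp1 q.1.1 q.1.2.1 q.1.2.2.2.1 ⟨q.1.2.2.2.2.1, q.2.1⟩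
        (comp1 q.1.2.1 q.1.2.2.1 q.1.2.2.2.1 ⟨q.1.2.2.2.2.2.1, q.2.2.1⟩
          ⟨q.1.2.2.2.2.2.2, q.2.2.2⟩)).val)
  -- computable operations on 2-cells: identities, vertical composition, inverses,
  -- horizontal composition
  id2 : CompFinds
    (fun q : {p : A × A × ℕ // p.2.2 ∈ hom p.1 p.2.1} =>
      Nat.pair (α q.1.1) (Nat.pair (α q.1.2.1) q.1.2.2))
    (fun q => hom2 q.1.1 q.1.2.1 q.1.2.2 q.1.2.2)
  vcomp : CompFinds
    (fun q : {p : A × A × ℕ × ℕ × ℕ × ℕ × ℕ //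
        p.2.2.1 ∈ hom p.1 p.2.1 ∧ p.2.2.2.1 ∈ hom p.1 p.2.1 ∧
        p.2.2.2.2.1 ∈ hom p.1 p.2.1 ∧
        p.2.2.2.2.2.1 ∈ hom2 p.1 p.2.1 p.2.2.1 p.2.2.2.1 ∧
        p.2.2.2.2.2.2 ∈ hom2 p.1 p.2.1 p.2.2.2.1 p.2.2.2.2.1} =>
      Nat.pair (α q.1.1) (Nat.pair (α q.1.2.1) (Nat.pair q.1.2.2.1
        (Nat.pair q.1.2.2.2.1 (Nat.pair q.1.2.2.2.2.1
          (Nat.pair q.1.2.2.2.2.2.1 q.1.2.2.2.2.2.2))))))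
    (fun q => hom2 q.1.1 q.1.2.1 q.1.2.2.1 q.1.2.2.2.2.1)
  inv2 : CompFinds
    (fun q : {p : A × A × ℕ × ℕ × ℕ //
        p.2.2.1 ∈ hom p.1 p.2.1 ∧ p.2.2.2.1 ∈ hom p.1 p.2.1 ∧
        p.2.2.2.2 ∈ hom2 p.1 p.2.1 p.2.2.1 p.2.2.2.1} =>
      Nat.pair (α q.1.1) (Nat.pair (α q.1.2.1) (Nat.pair q.1.2.2.1
        (Nat.pair q.1.2.2.2.1 q.1.2.2.2.2))))
    (fun q => hom2 q.1.1 q.1.2.1 q.1.2.2.2.1 q.1.2.2.1)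
  hcomp : CompFinds
    (fun q : {p : A × A × A × ℕ × ℕ × ℕ × ℕ × ℕ × ℕ //
        p.2.2.2.1 ∈ hom p.1 p.2.1 ∧ p.2.2.2.2.1 ∈ hom p.1 p.2.1 ∧
        p.2.2.2.2.2.1 ∈ hom p.2.1 p.2.2.1 ∧ p.2.2.2.2.2.2.1 ∈ hom p.2.1 p.2.2.1 ∧
        p.2.2.2.2.2.2.2.1 ∈ hom2 p.1 p.2.1 p.2.2.2.1 p.2.2.2.2.1 ∧
        p.2.2.2.2.2.2.2.2 ∈ hom2 p.2.1 p.2.2.1 p.2.2.2.2.2.1 p.2.2.2.2.2.2.1} =>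
      Nat.pair (α q.1.1) (Nat.pair (α q.1.2.1) (Nat.pair (α q.1.2.2.1)
        (Nat.pair q.1.2.2.2.1 (Nat.pair q.1.2.2.2.2.1 (Nat.pair q.1.2.2.2.2.2.1
          (Nat.pair q.1.2.2.2.2.2.2.1
            (Nat.pair q.1.2.2.2.2.2.2.2.1 q.1.2.2.2.2.2.2.2.2))))))))
    (fun q => hom2 q.1.1 q.1.2.2.1
      (comp1 q.1.1 q.1.2.1 q.1.2.2.1 ⟨q.1.2.2.2.1, q.2.1⟩
        ⟨q.1.2.2.2.2.2.1, q.2.2.2.1⟩).val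
      (comp1 q.1.1 q.1.2.1 q.1.2.2.1 ⟨q.1.2.2.2.2.1, q.2.2.1⟩
        ⟨q.1.2.2.2.2.2.2.1, q.2.2.2.2.1⟩).val)

/-- The 1-cells of an object of `EFF₁`. -/
abbrev Eff1Obj.Cell1 (A : Eff1Obj) (a a' : A.A) : Type := {n : ℕ // n ∈ A.hom a a'}

/-- The 2-cells of an object of `EFF₁` between parallel 1-cells. -/
abbrev Eff1Obj.Cell2 (A : Eff1Obj) {a a' : A.A} (π π' : A.Cell1 a a') : Type :=
  {n : ℕ // n ∈ A.hom2 a a' π.val π'.val}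

end EffPaper
namespace EffPaper
open CategoryTheory

/-- A morphism of `EFF₁`: computably tracked functions on 0-, 1- and 2-cells such
that 2-cells `f(1_b) ⇒ 1_{fb}` and `f(ρ∘π) ⇒ fρ ∘ fπ` can be computed from the
relevant data. -/
structure Eff1Hom (B A : Eff1Obj) : Type where
  f0 : B.A → A.A
  f1 : ∀ b b' : B.A, B.Cell1 b b' → A.Cell1 (f0 b) (f0 b')
  f2 : ∀ (b b' : B.A) (π π' : B.Cell1 b b'),
    B.Cell2 π π' → A.Cell2 (f1 b b' π) (f1 b b' π')
  tr0 : CompComputes (fun b : B.A => B.α b) (fun b => A.α (f0 b))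
  tr1 : CompComputes
    (fun x : (b : B.A) × (b' : B.A) × B.Cell1 b b' =>
      Nat.pair (B.α x.1) (Nat.pair (B.α x.2.1) x.2.2.val))
    (fun x => (f1 x.1 x.2.1 x.2.2).val)
  tr2 : CompComputes
    (fun x : (b : B.A) × (b' : B.A) × (π : B.Cell1 b b') ×
        (π' : B.Cell1 b b') × B.Cell2 π π' =>
      Nat.pair (B.α x.1) (Nat.pair (B.α x.2.1)
        (Nat.pair x.2.2.1.val (Nat.pair x.2.2.2.1.val x.2.2.2.2.val))))
    (fun x => (f2 x.1 x.2.1 x.2.2.1 x.2.2.2.1 x.2.2.2.2).val)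
  fid : CompFinds (fun b : B.A => B.α b)
    (fun b => A.hom2 (f0 b) (f0 b) (f1 b b (B.id1 b)).val (A.id1 (f0 b)).val)
  fcomp : CompFinds
    (fun x : (b : B.A) × (b' : B.A) × (b'' : B.A) ×
        (B.Cell1 b b' × B.Cell1 b' b'') =>
      Nat.pair (B.α x.1) (Nat.pair (B.α x.2.1) (Nat.pair (B.α x.2.2.1)
        (Nat.pair x.2.2.2.1.val x.2.2.2.2.val))))
    (fun x => A.hom2 (f0 x.1) (f0 x.2.2.1)
      (f1 x.1 x.2.2.1 (B.comp1 x.1 x.2.1 x.2.2.1 x.2.2.2.1 x.2.2.2.2)).val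
      (A.comp1 (f0 x.1) (f0 x.2.1) (f0 x.2.2.1)
        (f1 x.1 x.2.1 x.2.2.2.1) (f1 x.2.1 x.2.2.1 x.2.2.2.2)).val)

namespace Eff1

variable {X Y Z : Eff1Obj}

/-- The identity morphism of `EFF₁`. -/
def idHom (A : Eff1Obj) : Eff1Hom A A where
  f0 := fun a => a
  f1 := fun _ _ π => π
  f2 := fun _ _ _ _ n => n
  tr0 := CompComputes.id _
  tr1 := (CompComputes.projR _ _).comp (CompComputes.projR _ _)
  tr2 := (CompComputes.projR _ _).comp ((CompComputes.projR _ _).comp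
    ((CompComputes.projR _ _).comp (CompComputes.projR _ _)))
  fid := by
    have hm : ∀ a : A.A, ((A.id1 a).val ∈ A.hom a a) := fun a => (A.id1 a).2
    refine A.id2.via (fun a : A.A => ⟨⟨a, a, (A.id1 a).val⟩, hm a⟩) ?_
    exact (CompComputes.id _).pair ((CompComputes.id _).pair A.tr_id1)
  fcomp := by
    set T := (b : A.A) × (b' : A.A) × (b'' : A.A) × (A.Cell1 b b' × A.Cell1 b' b'')
    set cmp : ∀ x : T, A.Cell1 x.1 x.2.2.1 :=
      fun x => A.comp1 x.1 x.2.1 x.2.2.1 x.2.2.2.1 x.2.2.2.2 with hcmp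
    let e' : ∀ x : T, {p : A.A × A.A × A.A × ℕ × ℕ //
        p.2.2.2.1 ∈ A.hom p.1 p.2.1 ∧ p.2.2.2.2 ∈ A.hom p.2.1 p.2.2.1} :=
      fun x => ⟨⟨x.1, x.2.1, x.2.2.1, x.2.2.2.1.val, x.2.2.2.2.val⟩,
        x.2.2.2.1.2, x.2.2.2.2.2⟩
    have ccmp : CompComputes
        (fun x : T => Nat.pair (A.α x.1) (Nat.pair (A.α x.2.1) (Nat.pair (A.α x.2.2.1)
          (Nat.pair x.2.2.2.1.val x.2.2.2.2.val))))
        (fun x => (cmp x).val) := A.tr_comp1.precomp e'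
    refine A.id2.via (fun x : T => ⟨⟨x.1, x.2.2.1, (cmp x).val⟩, (cmp x).2⟩) ?_
    refine (CompComputes.projL _ _).pair (CompComputes.pair ?_ ccmp)
    exact (CompComputes.projL _ _).comp
      ((CompComputes.projR _ _).comp (CompComputes.projR _ _))

end Eff1
end EffPaper
namespace EffPaper
open CategoryTheory
namespace Eff1

variable {X Y Z : Eff1Obj}

/-- Composition of morphisms in `EFF₁`. -/
def compHom (f : Eff1Hom X Y) (g : Eff1Hom Y Z) : Eff1Hom X Z where
  f0 := fun b => g.f0 (f.f0 b)
  f1 := fun b b' π => g.f1 _ _ (f.f1 b b' π)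
  f2 := fun b b' π π' n => g.f2 _ _ _ _ (f.f2 b b' π π' n)
  tr0 := (g.tr0.precomp f.f0).comp f.tr0
  tr1 := by
    set T := (b : X.A) × (b' : X.A) × X.Cell1 b b' with hT
    have cb : CompComputes
        (fun x : T => Nat.pair (X.α x.1) (Nat.pair (X.α x.2.1) x.2.2.val))
        (fun x => X.α x.1) := CompComputes.projL _ _
    have cb' : CompComputes
        (fun x : T => Nat.pair (X.α x.1) (Nat.pair (X.α x.2.1) x.2.2.val))
        (fun x => X.α x.2.1) :=
      (CompComputes.projL _ _).comp (CompComputes.projR _ _)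
    refine (g.tr1.precomp (fun x : T =>
      (⟨f.f0 x.1, f.f0 x.2.1, f.f1 x.1 x.2.1 x.2.2⟩ :
        (b : Y.A) × (b' : Y.A) × Y.Cell1 b b'))).comp ?_
    refine CompComputes.pair ?_ (CompComputes.pair ?_ f.tr1)
    · exact (f.tr0.precomp (fun x : T => x.1)).comp cb
    · exact (f.tr0.precomp (fun x : T => x.2.1)).comp cb'
  tr2 := by
    set T := (b : X.A) × (b' : X.A) × (π : X.Cell1 b b') ×
      (π' : X.Cell1 b b') × X.Cell2 π π' with hT
    set I : T → ℕ := fun x => Nat.pair (X.α x.1) (Nat.pair (X.α x.2.1)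
      (Nat.pair x.2.2.1.val (Nat.pair x.2.2.2.1.val x.2.2.2.2.val))) with hI
    have cb : CompComputes I (fun x => X.α x.1) := CompComputes.projL _ _
    have cb' : CompComputes I (fun x => X.α x.2.1) :=
      (CompComputes.projL _ _).comp (CompComputes.projR _ _)
    have cπ : CompComputes I (fun x => x.2.2.1.val) :=
      (CompComputes.projL _ _).comp
        ((CompComputes.projR _ _).comp (CompComputes.projR _ _))
    have cπ' : CompComputes I (fun x => x.2.2.2.1.val) :=
      (CompComputes.projL _ _).comp ((CompComputes.projR _ _).comp
        ((CompComputes.projR _ _).comp (CompComputes.projR _ _)))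
    have cYb : CompComputes I (fun x => Y.α (f.f0 x.1)) :=
      (f.tr0.precomp (fun x : T => x.1)).comp cb
    have cYb' : CompComputes I (fun x => Y.α (f.f0 x.2.1)) :=
      (f.tr0.precomp (fun x : T => x.2.1)).comp cb'
    have cf1π : CompComputes I (fun x => (f.f1 x.1 x.2.1 x.2.2.1).val) :=
      (f.tr1.precomp (fun x : T =>
        (⟨x.1, x.2.1, x.2.2.1⟩ : (b : X.A) × (b' : X.A) × X.Cell1 b b'))).comp
        (cb.pair (cb'.pair cπ))
    have cf1π' : CompComputes I (fun x => (f.f1 x.1 x.2.1 x.2.2.2.1).val) :=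
      (f.tr1.precomp (fun x : T =>
        (⟨x.1, x.2.1, x.2.2.2.1⟩ : (b : X.A) × (b' : X.A) × X.Cell1 b b'))).comp
        (cb.pair (cb'.pair cπ'))
    refine (g.tr2.precomp (fun x : T =>
      (⟨f.f0 x.1, f.f0 x.2.1, f.f1 x.1 x.2.1 x.2.2.1, f.f1 x.1 x.2.1 x.2.2.2.1,
        f.f2 x.1 x.2.1 x.2.2.1 x.2.2.2.1 x.2.2.2.2⟩ :
        (b : Y.A) × (b' : Y.A) × (π : Y.Cell1 b b') ×
          (π' : Y.Cell1 b b') × Y.Cell2 π π'))).comp ?_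
    exact cYb.pair (cYb'.pair (cf1π.pair (cf1π'.pair f.tr2)))
  fid := by
    obtain ⟨uf, ufmem, ufcc⟩ := f.fid.toComputes
    obtain ⟨vg, vgmem, vgcc⟩ := g.fid.toComputes
    have cYα : CompComputes (fun b : X.A => X.α b) (fun b => Y.α (f.f0 b)) := f.tr0
    have cZα : CompComputes (fun b : X.A => X.α b)
        (fun b => Z.α (g.f0 (f.f0 b))) := (g.tr0.precomp f.f0).comp f.tr0
    have cf1id : CompComputes (fun b : X.A => X.α b)
        (fun b => (f.f1 b b (X.id1 b)).val) :=
      (f.tr1.precomp (fun b : X.A =>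
        (⟨b, b, X.id1 b⟩ : (b : X.A) × (b' : X.A) × X.Cell1 b b'))).comp
        ((CompComputes.id _).pair ((CompComputes.id _).pair X.tr_id1))
    have cYid : CompComputes (fun b : X.A => X.α b)
        (fun b => (Y.id1 (f.f0 b)).val) := (Y.tr_id1.precomp f.f0).comp f.tr0
    have cgu : CompComputes (fun b : X.A => X.α b)
        (fun b => (g.f2 (f.f0 b) (f.f0 b) (f.f1 b b (X.id1 b)) (Y.id1 (f.f0 b))
          ⟨uf b, ufmem b⟩).val) :=
      (g.tr2.precomp (fun b : X.A =>
        (⟨f.f0 b, f.f0 b, f.f1 b b (X.id1 b), Y.id1 (f.f0 b), ⟨uf b, ufmem b⟩⟩ :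
          (a : Y.A) × (a' : Y.A) × (π : Y.Cell1 a a') ×
            (π' : Y.Cell1 a a') × Y.Cell2 π π'))).comp
        (cYα.pair (cYα.pair (cf1id.pair (cYid.pair ufcc))))
    have cgf1id : CompComputes (fun b : X.A => X.α b)
        (fun b => (g.f1 (f.f0 b) (f.f0 b) (f.f1 b b (X.id1 b))).val) :=
      (g.tr1.precomp (fun b : X.A =>
        (⟨f.f0 b, f.f0 b, f.f1 b b (X.id1 b)⟩ :
          (a : Y.A) × (a' : Y.A) × Y.Cell1 a a'))).comp
        (cYα.pair (cYα.pair cf1id))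
    have cgYid : CompComputes (fun b : X.A => X.α b)
        (fun b => (g.f1 (f.f0 b) (f.f0 b) (Y.id1 (f.f0 b))).val) :=
      (g.tr1.precomp (fun b : X.A =>
        (⟨f.f0 b, f.f0 b, Y.id1 (f.f0 b)⟩ :
          (a : Y.A) × (a' : Y.A) × Y.Cell1 a a'))).comp
        (cYα.pair (cYα.pair cYid))
    have cZid : CompComputes (fun b : X.A => X.α b)
        (fun b => (Z.id1 (g.f0 (f.f0 b))).val) :=
      (Z.tr_id1.precomp (fun b : X.A => g.f0 (f.f0 b))).comp cZα
    have cvg : CompComputes (fun b : X.A => X.α b) (fun b => vg (f.f0 b)) :=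
      (vgcc.precomp f.f0).comp f.tr0
    exact Z.vcomp.via
      (fun b : X.A =>
        ⟨⟨g.f0 (f.f0 b), g.f0 (f.f0 b),
          (g.f1 (f.f0 b) (f.f0 b) (f.f1 b b (X.id1 b))).val,
          (g.f1 (f.f0 b) (f.f0 b) (Y.id1 (f.f0 b))).val,
          (Z.id1 (g.f0 (f.f0 b))).val,
          (g.f2 (f.f0 b) (f.f0 b) (f.f1 b b (X.id1 b)) (Y.id1 (f.f0 b))
            ⟨uf b, ufmem b⟩).val,
          vg (f.f0 b)⟩,
          (g.f1 _ _ _).2, (g.f1 _ _ _).2, (Z.id1 _).2,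
          (g.f2 _ _ _ _ _).2, vgmem (f.f0 b)⟩)
      (cZα.pair (cZα.pair (cgf1id.pair (cgYid.pair (cZid.pair (cgu.pair cvg))))))
  fcomp := by
    set T := (b : X.A) × (b' : X.A) × (b'' : X.A) ×
      (X.Cell1 b b' × X.Cell1 b' b'') with hT
    set I : T → ℕ := fun x => Nat.pair (X.α x.1) (Nat.pair (X.α x.2.1)
      (Nat.pair (X.α x.2.2.1) (Nat.pair x.2.2.2.1.val x.2.2.2.2.val))) with hI
    let cmp : ∀ x : T, X.Cell1 x.1 x.2.2.1 :=
      fun x => X.comp1 x.1 x.2.1 x.2.2.1 x.2.2.2.1 x.2.2.2.2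
    obtain ⟨uc, ucmem, uccc⟩ := f.fcomp.toComputes
    obtain ⟨vc, vcmem, vccc⟩ := g.fcomp.toComputes
    have cb : CompComputes I (fun x => X.α x.1) := CompComputes.projL _ _
    have cb' : CompComputes I (fun x => X.α x.2.1) :=
      (CompComputes.projL _ _).comp (CompComputes.projR _ _)
    have cb'' : CompComputes I (fun x => X.α x.2.2.1) :=
      (CompComputes.projL _ _).comp
        ((CompComputes.projR _ _).comp (CompComputes.projR _ _))
    have cπ : CompComputes I (fun x => x.2.2.2.1.val) :=
      (CompComputes.projL _ _).comp ((CompComputes.projR _ _).comp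
        ((CompComputes.projR _ _).comp (CompComputes.projR _ _)))
    have cρ : CompComputes I (fun x => x.2.2.2.2.val) :=
      (CompComputes.projR _ _).comp ((CompComputes.projR _ _).comp
        ((CompComputes.projR _ _).comp (CompComputes.projR _ _)))
    have cYb : CompComputes I (fun x => Y.α (f.f0 x.1)) :=
      (f.tr0.precomp (fun x : T => x.1)).comp cb
    have cYb' : CompComputes I (fun x => Y.α (f.f0 x.2.1)) :=
      (f.tr0.precomp (fun x : T => x.2.1)).comp cb'
    have cYb'' : CompComputes I (fun x => Y.α (f.f0 x.2.2.1)) :=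
      (f.tr0.precomp (fun x : T => x.2.2.1)).comp cb''
    have cZb : CompComputes I (fun x => Z.α (g.f0 (f.f0 x.1))) :=
      (g.tr0.precomp (fun x : T => f.f0 x.1)).comp cYb
    have cZb' : CompComputes I (fun x => Z.α (g.f0 (f.f0 x.2.1))) :=
      (g.tr0.precomp (fun x : T => f.f0 x.2.1)).comp cYb'
    have cZb'' : CompComputes I (fun x => Z.α (g.f0 (f.f0 x.2.2.1))) :=
      (g.tr0.precomp (fun x : T => f.f0 x.2.2.1)).comp cYb''
    have cXcmp : CompComputes I (fun x => (cmp x).val) :=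
      X.tr_comp1.precomp (fun x : T =>
        (⟨⟨x.1, x.2.1, x.2.2.1, x.2.2.2.1.val, x.2.2.2.2.val⟩,
          x.2.2.2.1.2, x.2.2.2.2.2⟩ :
          {p : X.A × X.A × X.A × ℕ × ℕ //
            p.2.2.2.1 ∈ X.hom p.1 p.2.1 ∧ p.2.2.2.2 ∈ X.hom p.2.1 p.2.2.1}))
    have cf1π : CompComputes I (fun x => (f.f1 x.1 x.2.1 x.2.2.2.1).val) :=
      (f.tr1.precomp (fun x : T =>
        (⟨x.1, x.2.1, x.2.2.2.1⟩ : (b : X.A) × (b' : X.A) × X.Cell1 b b'))).comp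
        (cb.pair (cb'.pair cπ))
    have cf1ρ : CompComputes I (fun x => (f.f1 x.2.1 x.2.2.1 x.2.2.2.2).val) :=
      (f.tr1.precomp (fun x : T =>
        (⟨x.2.1, x.2.2.1, x.2.2.2.2⟩ : (b : X.A) × (b' : X.A) × X.Cell1 b b'))).comp
        (cb'.pair (cb''.pair cρ))
    have cf1cmp : CompComputes I (fun x => (f.f1 x.1 x.2.2.1 (cmp x)).val) :=
      (f.tr1.precomp (fun x : T =>
        (⟨x.1, x.2.2.1, cmp x⟩ : (b : X.A) × (b' : X.A) × X.Cell1 b b'))).comp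
        (cb.pair (cb''.pair cXcmp))
    have cYcmp : CompComputes I (fun x => (Y.comp1 (f.f0 x.1) (f.f0 x.2.1)
        (f.f0 x.2.2.1) (f.f1 x.1 x.2.1 x.2.2.2.1)
        (f.f1 x.2.1 x.2.2.1 x.2.2.2.2)).val) :=
      (Y.tr_comp1.precomp (fun x : T =>
        (⟨⟨f.f0 x.1, f.f0 x.2.1, f.f0 x.2.2.1, (f.f1 x.1 x.2.1 x.2.2.2.1).val,
          (f.f1 x.2.1 x.2.2.1 x.2.2.2.2).val⟩,
          (f.f1 _ _ _).2, (f.f1 _ _ _).2⟩ :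
          {p : Y.A × Y.A × Y.A × ℕ × ℕ //
            p.2.2.2.1 ∈ Y.hom p.1 p.2.1 ∧ p.2.2.2.2 ∈ Y.hom p.2.1 p.2.2.1}))).comp
        (cYb.pair (cYb'.pair (cYb''.pair (cf1π.pair cf1ρ))))
    have cguc : CompComputes I
        (fun x => (g.f2 (f.f0 x.1) (f.f0 x.2.2.1) (f.f1 x.1 x.2.2.1 (cmp x))
          (Y.comp1 (f.f0 x.1) (f.f0 x.2.1) (f.f0 x.2.2.1)
            (f.f1 x.1 x.2.1 x.2.2.2.1) (f.f1 x.2.1 x.2.2.1 x.2.2.2.2))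
          ⟨uc x, ucmem x⟩).val) :=
      (g.tr2.precomp (fun x : T =>
        (⟨f.f0 x.1, f.f0 x.2.2.1, f.f1 x.1 x.2.2.1 (cmp x),
          Y.comp1 (f.f0 x.1) (f.f0 x.2.1) (f.f0 x.2.2.1)
            (f.f1 x.1 x.2.1 x.2.2.2.1) (f.f1 x.2.1 x.2.2.1 x.2.2.2.2),
          ⟨uc x, ucmem x⟩⟩ :
          (a : Y.A) × (a' : Y.A) × (π : Y.Cell1 a a') ×
            (π' : Y.Cell1 a a') × Y.Cell2 π π'))).comp
        (cYb.pair (cYb''.pair (cf1cmp.pair (cYcmp.pair uccc))))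
    set eg : T → ((b : Y.A) × (b' : Y.A) × (b'' : Y.A) ×
        (Y.Cell1 b b' × Y.Cell1 b' b'')) :=
      fun x => ⟨f.f0 x.1, f.f0 x.2.1, f.f0 x.2.2.1,
        (f.f1 x.1 x.2.1 x.2.2.2.1, f.f1 x.2.1 x.2.2.1 x.2.2.2.2)⟩ with heg
    have cvc : CompComputes I (fun x => vc (eg x)) :=
      (vccc.precomp eg).comp
        (cYb.pair (cYb'.pair (cYb''.pair (cf1π.pair cf1ρ))))
    have cgf1cmp : CompComputes I
        (fun x => (g.f1 (f.f0 x.1) (f.f0 x.2.2.1) (f.f1 x.1 x.2.2.1 (cmp x))).val) :=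
      (g.tr1.precomp (fun x : T =>
        (⟨f.f0 x.1, f.f0 x.2.2.1, f.f1 x.1 x.2.2.1 (cmp x)⟩ :
          (a : Y.A) × (a' : Y.A) × Y.Cell1 a a'))).comp
        (cYb.pair (cYb''.pair cf1cmp))
    have cgYcmp : CompComputes I
        (fun x => (g.f1 (f.f0 x.1) (f.f0 x.2.2.1)
          (Y.comp1 (f.f0 x.1) (f.f0 x.2.1) (f.f0 x.2.2.1)
            (f.f1 x.1 x.2.1 x.2.2.2.1) (f.f1 x.2.1 x.2.2.1 x.2.2.2.2))).val) :=
      (g.tr1.precomp (fun x : T =>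
        (⟨f.f0 x.1, f.f0 x.2.2.1,
          Y.comp1 (f.f0 x.1) (f.f0 x.2.1) (f.f0 x.2.2.1)
            (f.f1 x.1 x.2.1 x.2.2.2.1) (f.f1 x.2.1 x.2.2.1 x.2.2.2.2)⟩ :
          (a : Y.A) × (a' : Y.A) × Y.Cell1 a a'))).comp
        (cYb.pair (cYb''.pair cYcmp))
    have cgf1π : CompComputes I
        (fun x => (g.f1 (f.f0 x.1) (f.f0 x.2.1) (f.f1 x.1 x.2.1 x.2.2.2.1)).val) :=
      (g.tr1.precomp (fun x : T =>
        (⟨f.f0 x.1, f.f0 x.2.1, f.f1 x.1 x.2.1 x.2.2.2.1⟩ :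
          (a : Y.A) × (a' : Y.A) × Y.Cell1 a a'))).comp
        (cYb.pair (cYb'.pair cf1π))
    have cgf1ρ : CompComputes I
        (fun x => (g.f1 (f.f0 x.2.1) (f.f0 x.2.2.1)
          (f.f1 x.2.1 x.2.2.1 x.2.2.2.2)).val) :=
      (g.tr1.precomp (fun x : T =>
        (⟨f.f0 x.2.1, f.f0 x.2.2.1, f.f1 x.2.1 x.2.2.1 x.2.2.2.2⟩ :
          (a : Y.A) × (a' : Y.A) × Y.Cell1 a a'))).comp
        (cYb'.pair (cYb''.pair cf1ρ))
    have cZcmp : CompComputes I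
        (fun x => (Z.comp1 (g.f0 (f.f0 x.1)) (g.f0 (f.f0 x.2.1)) (g.f0 (f.f0 x.2.2.1))
          (g.f1 _ _ (f.f1 x.1 x.2.1 x.2.2.2.1))
          (g.f1 _ _ (f.f1 x.2.1 x.2.2.1 x.2.2.2.2))).val) :=
      (Z.tr_comp1.precomp (fun x : T =>
        (⟨⟨g.f0 (f.f0 x.1), g.f0 (f.f0 x.2.1), g.f0 (f.f0 x.2.2.1),
          (g.f1 _ _ (f.f1 x.1 x.2.1 x.2.2.2.1)).val,
          (g.f1 _ _ (f.f1 x.2.1 x.2.2.1 x.2.2.2.2)).val⟩,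
          (g.f1 _ _ _).2, (g.f1 _ _ _).2⟩ :
          {p : Z.A × Z.A × Z.A × ℕ × ℕ //
            p.2.2.2.1 ∈ Z.hom p.1 p.2.1 ∧ p.2.2.2.2 ∈ Z.hom p.2.1 p.2.2.1}))).comp
        (cZb.pair (cZb'.pair (cZb''.pair (cgf1π.pair cgf1ρ))))
    exact Z.vcomp.via
      (fun x : T =>
        ⟨⟨g.f0 (f.f0 x.1), g.f0 (f.f0 x.2.2.1),
          (g.f1 _ _ (f.f1 x.1 x.2.2.1 (cmp x))).val,
          (g.f1 _ _ (Y.comp1 (f.f0 x.1) (f.f0 x.2.1) (f.f0 x.2.2.1)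
            (f.f1 x.1 x.2.1 x.2.2.2.1) (f.f1 x.2.1 x.2.2.1 x.2.2.2.2))).val,
          (Z.comp1 (g.f0 (f.f0 x.1)) (g.f0 (f.f0 x.2.1)) (g.f0 (f.f0 x.2.2.1))
            (g.f1 _ _ (f.f1 x.1 x.2.1 x.2.2.2.1))
            (g.f1 _ _ (f.f1 x.2.1 x.2.2.1 x.2.2.2.2))).val,
          (g.f2 (f.f0 x.1) (f.f0 x.2.2.1) (f.f1 x.1 x.2.2.1 (cmp x))
            (Y.comp1 (f.f0 x.1) (f.f0 x.2.1) (f.f0 x.2.2.1)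
              (f.f1 x.1 x.2.1 x.2.2.2.1) (f.f1 x.2.1 x.2.2.1 x.2.2.2.2))
            ⟨uc x, ucmem x⟩).val,
          vc (eg x)⟩,
          (g.f1 _ _ _).2, (g.f1 _ _ _).2, (Z.comp1 _ _ _ _ _).2,
          (g.f2 _ _ _ _ _).2, vcmem (eg x)⟩)
      (cZb.pair (cZb''.pair (cgf1cmp.pair (cgYcmp.pair
        (cZcmp.pair (cguc.pair cvc))))))

end Eff1
end EffPaper
namespace EffPaper
open CategoryTheory

instance : Category.{0} Eff1Obj where
  Hom B A := Eff1Hom B A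
  id A := Eff1.idHom A
  comp f g := Eff1.compHom f g

end EffPaper
namespace EffPaper
open CategoryTheory

/-! ### Homotopies, equivalences and fibrations in `EFF₁`. -/

/-- A homotopy between two morphisms of `EFF₁`: computable functions assigning to
each 0-cell `b` a 1-cell `H₁ b : f b → g b` and to each 1-cell `π : b → b'` a 2-cell
`H₂ π : H₁(b') ∘ f(π) ⇒ g(π) ∘ H₁(b)` filling the square. -/
structure Eff1Htpy {B A : Eff1Obj} (f g : Eff1Hom B A) : Type where
  H1 : ∀ b : B.A, A.Cell1 (f.f0 b) (g.f0 b)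
  H2 : ∀ (b b' : B.A) (π : B.Cell1 b b'),
    {m : ℕ // m ∈ A.hom2 (f.f0 b) (g.f0 b')
      (A.comp1 (f.f0 b) (f.f0 b') (g.f0 b') (f.f1 b b' π) (H1 b')).val
      (A.comp1 (f.f0 b) (g.f0 b) (g.f0 b') (H1 b) (g.f1 b b' π)).val}
  trH1 : CompComputes (fun b : B.A => B.α b) (fun b => (H1 b).val)
  trH2 : CompComputes
    (fun x : (b : B.A) × (b' : B.A) × B.Cell1 b b' =>
      Nat.pair (B.α x.1) (Nat.pair (B.α x.2.1) x.2.2.val))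
    (fun x => (H2 x.1 x.2.1 x.2.2).val)

/-- Two morphisms of `EFF₁` are homotopic if there is a homotopy between them. -/
def Eff1Homotopic {B A : Eff1Obj} (f g : Eff1Hom B A) : Prop :=
  Nonempty (Eff1Htpy f g)

/-- A morphism of `EFF₁` is a (homotopy) equivalence if it has a homotopy inverse. -/
def Eff1Eqv {B A : Eff1Obj} (f : B ⟶ A) : Prop :=
  ∃ g : A ⟶ B, Eff1Homotopic (f ≫ g) (𝟙 B) ∧ Eff1Homotopic (g ≫ f) (𝟙 A)

/-- A 2-homotopy between homotopies `H, K : f ≃ g`: a computable function assigning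
to each `b` a 2-cell between `H₁ b` and `K₁ b`. -/
def Eff1TwoHtpy {B A : Eff1Obj} {f g : Eff1Hom B A} (H K : Eff1Htpy f g) : Prop :=
  ∃ M : B.A → ℕ,
    (∀ b, M b ∈ A.hom2 (f.f0 b) (g.f0 b) (H.H1 b).val (K.H1 b).val) ∧
    CompComputes (fun b : B.A => B.α b) M

/-- A morphism of `EFF₁` is a fibration: (i) 1-cells downstairs lift computably;
(ii) 2-cells `n : f(ρ) ⇒ π'` lift to 2-cells `m : ρ ⇒ ρ'` with `f(ρ') = π'`,
`f(m) = n`, computably; (iii) 2-cells between images of parallel 1-cells lift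
computably. -/
def Eff1Fib {B A : Eff1Obj} (f : B ⟶ A) : Prop :=
  (∃ φ ψ : ℕ →. ℕ, Partrec φ ∧ Partrec ψ ∧
    ∀ (b : B.A) (a : A.A) (π : ℕ), π ∈ A.hom (f.f0 b) a →
      ∃ (b' : B.A) (ρ : B.Cell1 b b'), f.f0 b' = a ∧ (f.f1 b b' ρ).val = π ∧
        B.α b' ∈ φ (Nat.pair (B.α b) (Nat.pair (A.α a) π)) ∧
        ρ.val ∈ ψ (Nat.pair (B.α b) (Nat.pair (A.α a) π))) ∧
  (∃ χ ω : ℕ →. ℕ, Partrec χ ∧ Partrec ω ∧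
    ∀ (b b' : B.A) (π π' : ℕ), π ∈ A.hom (f.f0 b) (f.f0 b') →
      π' ∈ A.hom (f.f0 b) (f.f0 b') →
      ∀ n : ℕ, n ∈ A.hom2 (f.f0 b) (f.f0 b') π π' →
      ∀ ρ : B.Cell1 b b', (f.f1 b b' ρ).val = π →
      ∃ (ρ' : B.Cell1 b b') (m : B.Cell2 ρ ρ'),
        (f.f1 b b' ρ').val = π' ∧ (f.f2 b b' ρ ρ' m).val = n ∧
        ρ'.val ∈ χ (Nat.pair (B.α b) (Nat.pair (B.α b')
          (Nat.pair π (Nat.pair π' (Nat.pair n ρ.val))))) ∧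
        m.val ∈ ω (Nat.pair (B.α b) (Nat.pair (B.α b')
          (Nat.pair π (Nat.pair π' (Nat.pair n ρ.val)))))) ∧
  (∃ θ : ℕ →. ℕ, Partrec θ ∧
    ∀ (b b' : B.A) (π π' : B.Cell1 b b') (m : B.Cell2 π π') (n : ℕ),
      n ∈ A.hom2 (f.f0 b) (f.f0 b') (f.f1 b b' π).val (f.f1 b b' π').val →
      ∃ m' : B.Cell2 π π', (f.f2 b b' π π' m').val = n ∧
        m'.val ∈ θ (Nat.pair (B.α b) (Nat.pair (B.α b')
          (Nat.pair π.val (Nat.pair π'.val (Nat.pair m.val n))))))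

/-- The path structure on `EFF₁`: fibrations and (homotopy) equivalences. -/
def Eff1PS : PathStruct Eff1Obj where
  Fib := fun {_ _} f => Eff1Fib f
  Eqv := fun {_ _} f => Eff1Eqv f

/-- A fibration in `EFF₁` is a standard discrete fibration if elements of the domain
are determined by their image and their realizer. -/
def Eff1StdDisc {B A : Eff1Obj} (f : B ⟶ A) : Prop :=
  Eff1Fib f ∧ ∀ b b' : B.A, f.f0 b = f.f0 b' → B.α b = B.α b' → b = b'

/-- A fibration in `EFF₁` is discrete if it can be written as a standard discrete
fibration after an equivalence. -/
def Eff1Disc {B A : Eff1Obj} (f : B ⟶ A) : Prop :=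
  Eff1Fib f ∧ ∃ (B' : Eff1Obj) (w : B ⟶ B') (g : B' ⟶ A),
    Eff1Eqv w ∧ Eff1StdDisc g ∧ w ≫ g = f

end EffPaper

namespace EffPaper
open CategoryTheory

/-! Let `g` be a homotopy inverse of `f`, with `ε : gf ≃ 1_B` and `η : fg ≃ 1_A`. After the
usual correction of `η`, the triangle `f ε ∼ η f` holds. The fibration `f` then lifts the
homotopy `η` to a homotopy `ρ : g ≃ s` with `f s = 1_A` and `f ρ = η`: on 0-cells `ρ_a` lifts
`η_a`, on a 1-cell `π` the value `s π` lifts the 2-cell `f (ρ⁻¹ ∘ g π ∘ ρ) ⇒ π` obtained from the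
naturality of `η`, and on 2-cells `s` is any lift. The homotopy `H = ρ f ∘ ε⁻¹ : 1_B ≃ s f` has
`f H = η f ∘ (f ε)⁻¹`, which the triangle identifies with the identity. Conversely, a section
`s` with `H : 1_B ≃ s f` is a homotopy inverse of `f`. -/

theorem Eff1Obj.comp1_val_congr (A : Eff1Obj) {a a' a'' c c' c'' : A.A}
    (h₁ : a = c) (h₂ : a' = c') (h₃ : a'' = c'')
    (u : A.Cell1 a a') (v : A.Cell1 a' a'') (u' : A.Cell1 c c') (v' : A.Cell1 c' c'')
    (hu : u.val = u'.val) (hv : v.val = v'.val) :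
    (A.comp1 a a' a'' u v).val = (A.comp1 c c' c'' u' v').val := by
  subst h₁ h₂ h₃
  obtain rfl : u = u' := Subtype.ext hu
  obtain rfl : v = v' := Subtype.ext hv
  rfl

theorem Eff1Hom.ext {B A : Eff1Obj} {p q : B ⟶ A} (h₀ : ∀ b, p.f0 b = q.f0 b)
    (h₁ : ∀ b b' (π : B.Cell1 b b'), (p.f1 b b' π).val = (q.f1 b b' π).val)
    (h₂ : ∀ b b' (π π' : B.Cell1 b b') (n : B.Cell2 π π'),
      (p.f2 b b' π π' n).val = (q.f2 b b' π π' n).val) : p = q := by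
  obtain ⟨p0, p1, p2, _, _, _, _, _⟩ := p
  obtain ⟨q0, q1, q2, _, _, _, _, _⟩ := q
  obtain rfl : p0 = q0 := funext h₀
  obtain rfl : p1 = q1 := by funext b b' π; exact Subtype.ext (h₁ b b' π)
  obtain rfl : p2 = q2 := by funext b b' π π' n; exact Subtype.ext (h₂ b b' π π' n)
  rfl

/-! `Fam0 A I`, `Fam1 a b` and `Fam2 p q` are families of 0-, 1- and 2-cells of `A`, indexed by
`X` and computable from the code `I x` of the index. The operations of `EFF₁` act on them
pointwise, so each effectivity condition is checked once, where the operation is defined.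
As in `Eff1Obj.comp1`, `p.comp q` is `p` followed by `q`. -/

structure Fam0 (A : Eff1Obj) {X : Type} (I : X → ℕ) where
  obj : X → A.A
  tr : CompComputes I fun x => A.α (obj x)

structure Fam1 {A : Eff1Obj} {X : Type} {I : X → ℕ} (a b : Fam0 A I) : Type where
  cell : ∀ x, A.Cell1 (a.obj x) (b.obj x)
  tr : CompComputes I fun x => (cell x).val

structure Fam2 {A : Eff1Obj} {X : Type} {I : X → ℕ} {a b : Fam0 A I} (p q : Fam1 a b) :
    Type where
  cell : ∀ x, A.Cell2 (p.cell x) (q.cell x)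
  tr : CompComputes I fun x => (cell x).val

section Families

variable {A B : Eff1Obj} {X Y : Type} {I : X → ℕ} {J : Y → ℕ}

namespace Fam0

def pull (a : Fam0 A I) (e : Y → X) (h : CompComputes J fun y => I (e y)) : Fam0 A J :=
  ⟨fun y => a.obj (e y), (a.tr.precomp e).comp h⟩

def map (a : Fam0 B I) (F : B ⟶ A) : Fam0 A I :=
  ⟨fun x => F.f0 (a.obj x), (F.tr0.precomp fun x => a.obj x).comp a.tr⟩

end Fam0

namespace Fam1

def id (a : Fam0 A I) : Fam1 a a :=
  ⟨fun x => A.id1 (a.obj x), (A.tr_id1.precomp fun x => a.obj x).comp a.tr⟩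

def comp {a b c : Fam0 A I} (p : Fam1 a b) (q : Fam1 b c) : Fam1 a c :=
  ⟨fun x => A.comp1 _ _ _ (p.cell x) (q.cell x),
    (A.tr_comp1.precomp (fun x =>
      ⟨⟨a.obj x, b.obj x, c.obj x, (p.cell x).val, (q.cell x).val⟩, (p.cell x).2,
        (q.cell x).2⟩)).comp
      (a.tr.pair (b.tr.pair (c.tr.pair (p.tr.pair q.tr))))⟩

def inv {a b : Fam0 A I} (p : Fam1 a b) : Fam1 b a :=
  ⟨fun x => A.inv1 _ _ (p.cell x),
    (A.tr_inv1.precomp (fun x => ⟨⟨a.obj x, b.obj x, (p.cell x).val⟩, (p.cell x).2⟩)).comp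
      (a.tr.pair (b.tr.pair p.tr))⟩

def pull {a b : Fam0 A I} (p : Fam1 a b) (e : Y → X)
    (h : CompComputes J fun y => I (e y)) : Fam1 (a.pull e h) (b.pull e h) :=
  ⟨fun y => p.cell (e y), (p.tr.precomp e).comp h⟩

def map {a b : Fam0 B I} (p : Fam1 a b) (F : B ⟶ A) : Fam1 (a.map F) (b.map F) :=
  ⟨fun x => F.f1 _ _ (p.cell x),
    (F.tr1.precomp (fun x => ⟨a.obj x, b.obj x, p.cell x⟩)).comp
      (a.tr.pair (b.tr.pair p.tr))⟩

def transport {a b : Fam0 A I} (p : Fam1 a b) (a' b' : Fam0 A I)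
    (ha : ∀ x, a.obj x = a'.obj x) (hb : ∀ x, b.obj x = b'.obj x) : Fam1 a' b' :=
  ⟨fun x => ⟨(p.cell x).val, ha x ▸ hb x ▸ (p.cell x).2⟩, p.tr⟩

end Fam1

namespace Fam2

noncomputable def ofFinds {a b : Fam0 A I} {p q : Fam1 a b}
    (h : CompFinds I fun x => A.hom2 (a.obj x) (b.obj x) (p.cell x).val (q.cell x).val) :
    Fam2 p q :=
  ⟨fun x => ⟨h.toComputes.choose x, h.toComputes.choose_spec.1 x⟩,
    h.toComputes.choose_spec.2⟩

noncomputable def id {a b : Fam0 A I} (p : Fam1 a b) : Fam2 p p :=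
  ofFinds (A.id2.via (fun x => ⟨(a.obj x, b.obj x, (p.cell x).val), (p.cell x).2⟩)
    (a.tr.pair (b.tr.pair p.tr)))

noncomputable def vcomp {a b : Fam0 A I} {p q r : Fam1 a b} (m : Fam2 p q) (n : Fam2 q r) :
    Fam2 p r :=
  ofFinds (A.vcomp.via (fun x =>
      ⟨(a.obj x, b.obj x, (p.cell x).val, (q.cell x).val, (r.cell x).val, (m.cell x).val,
          (n.cell x).val),
        (p.cell x).2, (q.cell x).2, (r.cell x).2, (m.cell x).2, (n.cell x).2⟩)
    (a.tr.pair (b.tr.pair (p.tr.pair (q.tr.pair (r.tr.pair (m.tr.pair n.tr)))))))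

noncomputable def symm {a b : Fam0 A I} {p q : Fam1 a b} (m : Fam2 p q) : Fam2 q p :=
  ofFinds (A.inv2.via (fun x =>
      ⟨(a.obj x, b.obj x, (p.cell x).val, (q.cell x).val, (m.cell x).val),
        (p.cell x).2, (q.cell x).2, (m.cell x).2⟩)
    (a.tr.pair (b.tr.pair (p.tr.pair (q.tr.pair m.tr)))))

noncomputable def hcomp {a b c : Fam0 A I} {p p' : Fam1 a b} {q q' : Fam1 b c}
    (m : Fam2 p p') (n : Fam2 q q') : Fam2 (p.comp q) (p'.comp q') :=
  ofFinds (A.hcomp.via (fun x =>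
      ⟨(a.obj x, b.obj x, c.obj x, (p.cell x).val, (p'.cell x).val, (q.cell x).val,
          (q'.cell x).val, (m.cell x).val, (n.cell x).val),
        (p.cell x).2, (p'.cell x).2, (q.cell x).2, (q'.cell x).2, (m.cell x).2, (n.cell x).2⟩)
    (a.tr.pair (b.tr.pair (c.tr.pair (p.tr.pair (p'.tr.pair (q.tr.pair
      (q'.tr.pair (m.tr.pair n.tr)))))))))

noncomputable def lunit {a b : Fam0 A I} (p : Fam1 a b) : Fam2 (p.comp (Fam1.id b)) p :=
  ofFinds (A.lunit.via (fun x => ⟨(a.obj x, b.obj x, (p.cell x).val), (p.cell x).2⟩)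
    (a.tr.pair (b.tr.pair p.tr)))

noncomputable def runit {a b : Fam0 A I} (p : Fam1 a b) : Fam2 ((Fam1.id a).comp p) p :=
  ofFinds (A.runit.via (fun x => ⟨(a.obj x, b.obj x, (p.cell x).val), (p.cell x).2⟩)
    (a.tr.pair (b.tr.pair p.tr)))

noncomputable def linv {a b : Fam0 A I} (p : Fam1 a b) : Fam2 (p.comp p.inv) (Fam1.id a) :=
  ofFinds (A.linv.via (fun x => ⟨(a.obj x, b.obj x, (p.cell x).val), (p.cell x).2⟩)
    (a.tr.pair (b.tr.pair p.tr)))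

noncomputable def rinv {a b : Fam0 A I} (p : Fam1 a b) : Fam2 (p.inv.comp p) (Fam1.id b) :=
  ofFinds (A.rinv.via (fun x => ⟨(a.obj x, b.obj x, (p.cell x).val), (p.cell x).2⟩)
    (a.tr.pair (b.tr.pair p.tr)))

noncomputable def assoc {a b c d : Fam0 A I} (p : Fam1 a b) (q : Fam1 b c) (r : Fam1 c d) :
    Fam2 ((p.comp q).comp r) (p.comp (q.comp r)) :=
  ofFinds (A.assoc2.via (fun x =>
      ⟨(a.obj x, b.obj x, c.obj x, d.obj x, (p.cell x).val, (q.cell x).val, (r.cell x).val),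
        (p.cell x).2, (q.cell x).2, (r.cell x).2⟩)
    (a.tr.pair (b.tr.pair (c.tr.pair (d.tr.pair (p.tr.pair (q.tr.pair r.tr)))))))

def pull {a b : Fam0 A I} {p q : Fam1 a b} (m : Fam2 p q) (e : Y → X)
    (h : CompComputes J fun y => I (e y)) : Fam2 (p.pull e h) (q.pull e h) :=
  ⟨fun y => m.cell (e y), (m.tr.precomp e).comp h⟩

def map {a b : Fam0 B I} {p q : Fam1 a b} (m : Fam2 p q) (F : B ⟶ A) :
    Fam2 (p.map F) (q.map F) :=
  ⟨fun x => F.f2 _ _ _ _ (m.cell x),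
    (F.tr2.precomp (fun x => ⟨a.obj x, b.obj x, p.cell x, q.cell x, m.cell x⟩)).comp
      (a.tr.pair (b.tr.pair (p.tr.pair (q.tr.pair m.tr))))⟩

def transport {a b : Fam0 A I} {p q : Fam1 a b} (m : Fam2 p q)
    {a' b' : Fam0 A I} {p' q' : Fam1 a' b'}
    (ha : ∀ x, a.obj x = a'.obj x) (hb : ∀ x, b.obj x = b'.obj x)
    (hp : ∀ x, (p.cell x).val = (p'.cell x).val)
    (hq : ∀ x, (q.cell x).val = (q'.cell x).val) : Fam2 p' q' :=
  ⟨fun x => ⟨(m.cell x).val, hp x ▸ hq x ▸ ha x ▸ hb x ▸ (m.cell x).2⟩, m.tr⟩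

noncomputable def whiskL {a b c : Fam0 A I} (p : Fam1 a b) {q r : Fam1 b c} (m : Fam2 q r) :
    Fam2 (p.comp q) (p.comp r) :=
  (Fam2.id p).hcomp m

noncomputable def whiskR {a b c : Fam0 A I} {p q : Fam1 a b} (m : Fam2 p q) (r : Fam1 b c) :
    Fam2 (p.comp r) (q.comp r) :=
  m.hcomp (Fam2.id r)

noncomputable def invCompOfComp {a b c : Fam0 A I} {p : Fam1 a b} {u : Fam1 a c}
    {v : Fam1 b c} (m : Fam2 u (p.comp v)) : Fam2 (p.inv.comp u) v :=
  (whiskL p.inv m).vcomp ((assoc p.inv p v).symm.vcomp ((whiskR (rinv p) v).vcomp (runit v)))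

noncomputable def compOfInvComp {a b c : Fam0 A I} {p : Fam1 a b} {u : Fam1 a c}
    {v : Fam1 b c} (m : Fam2 (p.inv.comp u) v) : Fam2 u (p.comp v) :=
  (runit u).symm.vcomp ((whiskR (linv p).symm u).vcomp ((assoc p p.inv u).vcomp (whiskL p m)))

noncomputable def cancelR {a b c : Fam0 A I} {p q : Fam1 a b} (r : Fam1 b c)
    (m : Fam2 (p.comp r) (q.comp r)) : Fam2 p q :=
  ((((((lunit p).symm.vcomp (whiskL p (linv r).symm)).vcomp
    (assoc p r r.inv).symm).vcomp (whiskR m r.inv)).vcomp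
    (assoc q r r.inv)).vcomp (whiskL q (linv r))).vcomp (lunit q)

noncomputable def invSquare {a a' b b' : Fam0 A I} {u : Fam1 a b} {k' : Fam1 b b'}
    {k : Fam1 a a'} {v : Fam1 a' b'} (m : Fam2 (u.comp k') (k.comp v)) :
    Fam2 (v.comp k'.inv) (k.inv.comp u) :=
  cancelR k' ((assoc v k'.inv k').vcomp ((whiskL v (rinv k')).vcomp
    ((lunit v).vcomp ((invCompOfComp m).symm.vcomp (assoc k.inv u k').symm))))

noncomputable def mapId (F : B ⟶ A) (a : Fam0 B I) :
    Fam2 ((Fam1.id a).map F) (Fam1.id (a.map F)) :=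
  ofFinds (F.fid.via a.obj a.tr)

noncomputable def mapComp (F : B ⟶ A) {a b c : Fam0 B I} (p : Fam1 a b) (q : Fam1 b c) :
    Fam2 ((p.comp q).map F) ((p.map F).comp (q.map F)) :=
  ofFinds (F.fcomp.via (fun x => ⟨a.obj x, b.obj x, c.obj x, (p.cell x, q.cell x)⟩)
    (a.tr.pair (b.tr.pair (c.tr.pair (p.tr.pair q.tr)))))

noncomputable def mapInv (F : B ⟶ A) {a b : Fam0 B I} (p : Fam1 a b) :
    Fam2 (p.inv.map F) (p.map F).inv :=
  cancelR (p.map F)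
    (((mapComp F p.inv p).symm.vcomp (((rinv p).map F).vcomp (mapId F b))).vcomp
      (rinv (p.map F)).symm)

end Fam2

end Families

/-! The index types of 1-cells, 2-cells and composable pairs are coded as in the tracking
fields of `Eff1Hom`, so that a morphism is given by families over them. -/

section CanonicalFamilies

variable {B C : Eff1Obj} {X : Type} {I : X → ℕ}

def base (B : Eff1Obj) : Fam0 B fun b : B.A => B.α b :=
  ⟨fun b => b, CompComputes.id _⟩

abbrev Idx1 (B : Eff1Obj) : Type := (b : B.A) × (b' : B.A) × B.Cell1 b b'

namespace Idx1

def enc (B : Eff1Obj) (x : Idx1 B) : ℕ :=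
  Nat.pair (B.α x.1) (Nat.pair (B.α x.2.1) x.2.2.val)

def src (B : Eff1Obj) : Fam0 B (enc B) := ⟨fun x => x.1, CompComputes.projL _ _⟩

def tgt (B : Eff1Obj) : Fam0 B (enc B) :=
  ⟨fun x => x.2.1, (CompComputes.projL _ _).comp (CompComputes.projR _ _)⟩

def cell (B : Eff1Obj) : Fam1 (src B) (tgt B) :=
  ⟨fun x => x.2.2, (CompComputes.projR _ _).comp (CompComputes.projR _ _)⟩

def of {a b : Fam0 C I} (p : Fam1 a b) (x : X) : Idx1 C := ⟨a.obj x, b.obj x, p.cell x⟩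

theorem of_tr {a b : Fam0 C I} (p : Fam1 a b) : CompComputes I fun x => enc C (of p x) :=
  a.tr.pair (b.tr.pair p.tr)

end Idx1

abbrev Idx2 (B : Eff1Obj) : Type :=
  (b : B.A) × (b' : B.A) × (π : B.Cell1 b b') × (π' : B.Cell1 b b') × B.Cell2 π π'

namespace Idx2

def enc (B : Eff1Obj) (x : Idx2 B) : ℕ :=
  Nat.pair (B.α x.1) (Nat.pair (B.α x.2.1)
    (Nat.pair x.2.2.1.val (Nat.pair x.2.2.2.1.val x.2.2.2.2.val)))

def src (B : Eff1Obj) : Fam0 B (enc B) := ⟨fun x => x.1, CompComputes.projL _ _⟩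

def tgt (B : Eff1Obj) : Fam0 B (enc B) :=
  ⟨fun x => x.2.1, (CompComputes.projL _ _).comp (CompComputes.projR _ _)⟩

def cellL (B : Eff1Obj) : Fam1 (src B) (tgt B) :=
  ⟨fun x => x.2.2.1,
    (CompComputes.projL _ _).comp ((CompComputes.projR _ _).comp (CompComputes.projR _ _))⟩

def cellR (B : Eff1Obj) : Fam1 (src B) (tgt B) :=
  ⟨fun x => x.2.2.2.1, (CompComputes.projL _ _).comp ((CompComputes.projR _ _).comp
    ((CompComputes.projR _ _).comp (CompComputes.projR _ _)))⟩

def cell2 (B : Eff1Obj) : Fam2 (cellL B) (cellR B) :=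
  ⟨fun x => x.2.2.2.2, (CompComputes.projR _ _).comp ((CompComputes.projR _ _).comp
    ((CompComputes.projR _ _).comp (CompComputes.projR _ _)))⟩

end Idx2

abbrev Composable (B : Eff1Obj) : Type :=
  (b : B.A) × (b' : B.A) × (b'' : B.A) × (B.Cell1 b b' × B.Cell1 b' b'')

namespace Composable

def enc (B : Eff1Obj) (x : Composable B) : ℕ :=
  Nat.pair (B.α x.1) (Nat.pair (B.α x.2.1)
    (Nat.pair (B.α x.2.2.1) (Nat.pair x.2.2.2.1.val x.2.2.2.2.val)))

def src (B : Eff1Obj) : Fam0 B (enc B) := ⟨fun x => x.1, CompComputes.projL _ _⟩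

def mid (B : Eff1Obj) : Fam0 B (enc B) :=
  ⟨fun x => x.2.1, (CompComputes.projL _ _).comp (CompComputes.projR _ _)⟩

def tgt (B : Eff1Obj) : Fam0 B (enc B) :=
  ⟨fun x => x.2.2.1,
    (CompComputes.projL _ _).comp ((CompComputes.projR _ _).comp (CompComputes.projR _ _))⟩

def fst (B : Eff1Obj) : Fam1 (src B) (mid B) :=
  ⟨fun x => x.2.2.2.1, (CompComputes.projL _ _).comp ((CompComputes.projR _ _).comp
    ((CompComputes.projR _ _).comp (CompComputes.projR _ _)))⟩

def snd (B : Eff1Obj) : Fam1 (mid B) (tgt B) :=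
  ⟨fun x => x.2.2.2.2, (CompComputes.projR _ _).comp ((CompComputes.projR _ _).comp
    ((CompComputes.projR _ _).comp (CompComputes.projR _ _)))⟩

end Composable

def Fam0.along (s : Fam0 B fun c : C.A => C.α c) (a : Fam0 C I) : Fam0 B I :=
  s.pull a.obj a.tr

def Fam1.along {s t : Fam0 B fun c : C.A => C.α c} (ρ : Fam1 s t) (a : Fam0 C I) :
    Fam1 (s.along a) (t.along a) :=
  ρ.pull a.obj a.tr

def Fam1.eval {s : Fam0 B fun c : C.A => C.α c}
    (σ : Fam1 (s.along (Idx1.src C)) (s.along (Idx1.tgt C))) {a b : Fam0 C I}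
    (p : Fam1 a b) : Fam1 (s.along a) (s.along b) :=
  σ.pull (Idx1.of p) (Idx1.of_tr p)

def Fam2.eval {s : Fam0 B fun c : C.A => C.α c}
    {σ σ' : Fam1 (s.along (Idx1.src C)) (s.along (Idx1.tgt C))} (m : Fam2 σ σ')
    {a b : Fam0 C I} (p : Fam1 a b) : Fam2 (σ.eval p) (σ'.eval p) :=
  m.pull (Idx1.of p) (Idx1.of_tr p)

end CanonicalFamilies

namespace Eff1Htpy

section Operations

variable {A B C : Eff1Obj} {X : Type} {I : X → ℕ} {F G K : B ⟶ A}

def app (H : Eff1Htpy F G) (a : Fam0 B I) : Fam1 (a.map F) (a.map G) :=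
  ⟨fun x => H.H1 (a.obj x), (H.trH1.precomp fun x => a.obj x).comp a.tr⟩

def naturality (H : Eff1Htpy F G) {a b : Fam0 B I} (p : Fam1 a b) :
    Fam2 ((p.map F).comp (H.app b)) ((H.app a).comp (p.map G)) :=
  ⟨fun x => H.H2 _ _ (p.cell x),
    (H.trH2.precomp (fun x => ⟨a.obj x, b.obj x, p.cell x⟩)).comp
      (a.tr.pair (b.tr.pair p.tr))⟩

def ofFam (H1 : Fam1 ((base B).map F) ((base B).map G))
    (H2 : Fam2 (((Idx1.cell B).map F).comp (H1.along (Idx1.tgt B)))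
      ((H1.along (Idx1.src B)).comp ((Idx1.cell B).map G))) :
    Eff1Htpy F G :=
  ⟨fun b => H1.cell b, fun b b' π => H2.cell ⟨b, b', π⟩, H1.tr, H2.tr⟩

noncomputable def refl (F : B ⟶ A) : Eff1Htpy F F :=
  ofFam (Fam1.id ((base B).map F))
    ((Fam2.lunit ((Idx1.cell B).map F)).vcomp (Fam2.runit ((Idx1.cell B).map F)).symm)

noncomputable def symm (H : Eff1Htpy F G) : Eff1Htpy G F :=
  ofFam (H.app (base B)).inv (H.naturality (Idx1.cell B)).invSquare

noncomputable def trans (H : Eff1Htpy F G) (H' : Eff1Htpy G K) : Eff1Htpy F K :=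
  ofFam ((H.app (base B)).comp (H'.app (base B)))
    (((((Fam2.assoc _ _ _).symm.vcomp (Fam2.whiskR (H.naturality (Idx1.cell B)) _)).vcomp
      (Fam2.assoc _ _ _)).vcomp (Fam2.whiskL _ (H'.naturality (Idx1.cell B)))).vcomp
      (Fam2.assoc _ _ _).symm)

def whiskerLeft (E : C ⟶ B) (H : Eff1Htpy F G) : Eff1Htpy (E ≫ F) (E ≫ G) :=
  ofFam (H.app ((base C).map E)) (H.naturality ((Idx1.cell C).map E))

noncomputable def whiskerRight (H : Eff1Htpy F G) (E : A ⟶ C) :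
    Eff1Htpy (F ≫ E) (G ≫ E) :=
  ofFam ((H.app (base B)).map E)
    (((Fam2.mapComp E _ _).symm.vcomp ((H.naturality (Idx1.cell B)).map E)).vcomp
      (Fam2.mapComp E _ _))

noncomputable def appMapSelf {E : B ⟶ B} (H : Eff1Htpy E (𝟙 B)) (a : Fam0 B I) :
    Fam2 ((H.app a).map E) (H.app (a.map E)) :=
  Fam2.cancelR (H.app a) (H.naturality (H.app a))

end Operations

section Adjointification

variable {A B : Eff1Obj} {f : B ⟶ A} {g : A ⟶ B}

/-- The half-adjoint correction: `(adjointify ε η).H1 a = fg(η_a)⁻¹ ; f(ε_{ga}) ; η_a`. -/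
noncomputable def adjointify (ε : Eff1Htpy (f ≫ g) (𝟙 B)) (η : Eff1Htpy (g ≫ f) (𝟙 A)) :
    Eff1Htpy (g ≫ f) (𝟙 A) :=
  (η.whiskerRight (g ≫ f)).symm.trans (((ε.whiskerLeft g).whiskerRight f).trans η)

noncomputable def adjointifyTriangle (ε : Eff1Htpy (f ≫ g) (𝟙 B))
    (η : Eff1Htpy (g ≫ f) (𝟙 A)) :
    Fam2 ((ε.app (base B)).map f) ((adjointify ε η).app ((base B).map f)) :=
  let fε := (ε.app (base B)).map f
  let fgfε_to_fεgf : Fam2 (fε.map (g ≫ f)) ((ε.app ((base B).map (f ≫ g))).map f) :=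
    (ε.appMapSelf (base B)).map f
  let ηfgf_to_fgηf : Fam2 (η.app (((base B).map f).map (g ≫ f)))
      ((η.app ((base B).map f)).map (g ≫ f)) :=
    (η.appMapSelf ((base B).map f)).symm
  (Fam2.invCompOfComp (((Fam2.whiskR fgfε_to_fεgf.symm _).vcomp (η.naturality fε)).vcomp
    (Fam2.whiskR ηfgf_to_fgηf fε))).symm

end Adjointification

end Eff1Htpy

section Conjugation

variable {B C : Eff1Obj} {X : Type} {I : X → ℕ}

def Eff1Hom.ofFam (s : Fam0 B fun c : C.A => C.α c)
    (σ : Fam1 (s.along (Idx1.src C)) (s.along (Idx1.tgt C)))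
    (σ2 : Fam2 (σ.eval (Idx2.cellL C)) (σ.eval (Idx2.cellR C)))
    (hid : Fam2 (σ.eval (Fam1.id (base C))) (Fam1.id s))
    (hcomp : Fam2 (σ.eval ((Composable.fst C).comp (Composable.snd C)))
      ((σ.eval (Composable.fst C)).comp (σ.eval (Composable.snd C)))) :
    C ⟶ B where
  f0 := s.obj
  f1 c c' π := σ.cell ⟨c, c', π⟩
  f2 c c' π π' n := σ2.cell ⟨c, c', π, π', n⟩
  tr0 := s.tr
  tr1 := σ.tr
  tr2 := σ2.tr
  fid := hid.tr.toFinds fun c => (hid.cell c).2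
  fcomp := hcomp.tr.toFinds fun x => (hcomp.cell x).2

variable {g : C ⟶ B} {s : Fam0 B fun c : C.A => C.α c}

def Fam1.conjBy (ρ : Fam1 ((base C).map g) s) {a b : Fam0 C I} (p : Fam1 a b) :
    Fam1 (s.along a) (s.along b) :=
  (ρ.along a).inv.comp ((p.map g).comp (ρ.along b))

namespace Fam2

noncomputable def conjBy (ρ : Fam1 ((base C).map g) s) {a b : Fam0 C I} {p q : Fam1 a b}
    (n : Fam2 p q) : Fam2 (ρ.conjBy p) (ρ.conjBy q) :=
  whiskL _ (whiskR (n.map g) _)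

noncomputable def conjById (ρ : Fam1 ((base C).map g) s) (a : Fam0 C I) :
    Fam2 (ρ.conjBy (Fam1.id a)) (Fam1.id (s.along a)) :=
  invCompOfComp ((whiskR (mapId g a) _).vcomp ((runit _).vcomp (lunit _).symm))

noncomputable def conjByComp (ρ : Fam1 ((base C).map g) s) {a b c : Fam0 C I}
    (p : Fam1 a b) (q : Fam1 b c) :
    Fam2 (ρ.conjBy (p.comp q)) ((ρ.conjBy p).comp (ρ.conjBy q)) :=
  (whiskL _ ((whiskR (mapComp g p q) _).vcomp ((assoc _ _ _).vcomp
    ((whiskL _ (compOfInvComp (Fam2.id _))).vcomp (assoc _ _ _).symm)))).vcomp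
    (assoc _ _ _).symm

noncomputable def conjByMap {A : Eff1Obj} {f : B ⟶ A} {h : C ⟶ A}
    (K : Eff1Htpy (g ≫ f) h) (ρ : Fam1 ((base C).map g) s)
    (hs : ∀ c, f.f0 (s.obj c) = h.f0 c) (hρ : ∀ c, (f.f1 _ _ (ρ.cell c)).val = (K.H1 c).val)
    {a b : Fam0 C I} (p : Fam1 a b) :
    Fam2 ((ρ.conjBy p).map f) ((p.map h).transport ((s.along a).map f) ((s.along b).map f)
      (fun x => (hs (a.obj x)).symm) (fun x => (hs (b.obj x)).symm)) :=
  let square : Fam2 (((p.map g).map f).comp ((ρ.along b).map f))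
      (((ρ.along a).map f).comp ((p.map h).transport ((s.along a).map f) ((s.along b).map f)
        (fun x => (hs (a.obj x)).symm) (fun x => (hs (b.obj x)).symm))) :=
    transport (K.naturality p) (fun _ => rfl) (fun x => (hs (b.obj x)).symm)
      (fun x => A.comp1_val_congr rfl rfl (hs (b.obj x)).symm _ _ _ _ rfl (hρ (b.obj x)).symm)
      (fun x => A.comp1_val_congr rfl (hs (a.obj x)).symm (hs (b.obj x)).symm _ _ _ _
        (hρ (a.obj x)).symm rfl)
  (mapComp f _ _).vcomp ((hcomp (mapInv f _) (mapComp f _ _)).vcomp (invCompOfComp square))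

end Fam2

variable (ρ : Fam1 ((base C).map g) s) (σ : Fam1 (s.along (Idx1.src C)) (s.along (Idx1.tgt C)))
  (m : Fam2 (ρ.conjBy (Idx1.cell C)) σ)
  (σ2 : Fam2 (σ.eval (Idx2.cellL C)) (σ.eval (Idx2.cellR C)))

/-- The unit and composition 2-cells are those of `g`, transported along `m`; the action `σ2`
on 2-cells is unconstrained. -/
noncomputable def Eff1Hom.ofConj : C ⟶ B :=
  Eff1Hom.ofFam s σ σ2 ((m.eval (Fam1.id (base C))).symm.vcomp (Fam2.conjById ρ (base C)))
    ((m.eval _).symm.vcomp ((Fam2.conjByComp ρ (Composable.fst C) (Composable.snd C)).vcomp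
      (Fam2.hcomp (m.eval (Composable.fst C)) (m.eval (Composable.snd C)))))

noncomputable def Eff1Htpy.ofConj : Eff1Htpy g (Eff1Hom.ofConj ρ σ m σ2) :=
  Eff1Htpy.ofFam ρ (Fam2.compOfInvComp m)

end Conjugation

namespace Eff1Fib

variable {A B C : Eff1Obj} {f : B ⟶ A} {X : Type} {I : X → ℕ}

theorem exists_lift_cell1 (hf : Eff1Fib f) {b : Fam0 B I} {a : Fam0 A I}
    (p : Fam1 (b.map f) a) :
    ∃ (b' : Fam0 B I) (ρ : Fam1 b b'),
      ∀ x, f.f0 (b'.obj x) = a.obj x ∧ (f.f1 _ _ (ρ.cell x)).val = (p.cell x).val := by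
  obtain ⟨⟨φ, ψ, hφ, hψ, hlift⟩, -, -⟩ := hf
  choose b' ρ hb' hρ hb'φ hρψ using fun x =>
    hlift (b.obj x) (a.obj x) (p.cell x).val (p.cell x).2
  have input : CompComputes I fun x =>
      Nat.pair (B.α (b.obj x)) (Nat.pair (A.α (a.obj x)) (p.cell x).val) :=
    b.tr.pair (a.tr.pair p.tr)
  exact ⟨⟨b', CompComputes.comp ⟨φ, hφ, hb'φ⟩ input⟩,
    ⟨ρ, CompComputes.comp ⟨ψ, hψ, hρψ⟩ input⟩, fun x => ⟨hb' x, hρ x⟩⟩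

theorem exists_lift_of_cell2 (hf : Eff1Fib f) {b b' : Fam0 B I} (ρ : Fam1 b b')
    {π : Fam1 (b.map f) (b'.map f)} (n : Fam2 (ρ.map f) π) :
    ∃ (ρ' : Fam1 b b') (_ : Fam2 ρ ρ'), ∀ x, (f.f1 _ _ (ρ'.cell x)).val = (π.cell x).val := by
  obtain ⟨-, ⟨χ, ω, hχ, hω, hlift⟩, -⟩ := hf
  choose ρ' m hρ' _ hρ'χ hmω using fun x => hlift (b.obj x) (b'.obj x) _ (π.cell x).val
    (f.f1 _ _ (ρ.cell x)).2 (π.cell x).2 (n.cell x).val (n.cell x).2 (ρ.cell x) rfl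
  have input : CompComputes I fun x => Nat.pair (B.α (b.obj x)) (Nat.pair (B.α (b'.obj x))
      (Nat.pair (f.f1 _ _ (ρ.cell x)).val (Nat.pair (π.cell x).val
        (Nat.pair (n.cell x).val (ρ.cell x).val)))) :=
    b.tr.pair (b'.tr.pair ((ρ.map f).tr.pair (π.tr.pair (n.tr.pair ρ.tr))))
  exact ⟨⟨ρ', CompComputes.comp ⟨χ, hχ, hρ'χ⟩ input⟩,
    ⟨m, CompComputes.comp ⟨ω, hω, hmω⟩ input⟩, hρ'⟩

theorem exists_lift_cell2 (hf : Eff1Fib f) {b b' : Fam0 B I} {ρ ρ' : Fam1 b b'}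
    (m : Fam2 ρ ρ') (n : Fam2 (ρ.map f) (ρ'.map f)) :
    ∃ m' : Fam2 ρ ρ', ∀ x, (f.f2 _ _ _ _ (m'.cell x)).val = (n.cell x).val := by
  obtain ⟨-, -, ⟨θ, hθ, hlift⟩⟩ := hf
  choose m' hm' hm'θ using fun x =>
    hlift (b.obj x) (b'.obj x) _ _ (m.cell x) (n.cell x).val (n.cell x).2
  have input : CompComputes I fun x => Nat.pair (B.α (b.obj x)) (Nat.pair (B.α (b'.obj x))
      (Nat.pair (ρ.cell x).val (Nat.pair (ρ'.cell x).val
        (Nat.pair (m.cell x).val (n.cell x).val)))) :=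
    b.tr.pair (b'.tr.pair (ρ.tr.pair (ρ'.tr.pair (m.tr.pair n.tr))))
  exact ⟨⟨m', CompComputes.comp ⟨θ, hθ, hm'θ⟩ input⟩, hm'⟩

theorem exists_htpy_lift (hf : Eff1Fib f) {g : C ⟶ B} {h : C ⟶ A} (K : Eff1Htpy (g ≫ f) h) :
    ∃ (s : C ⟶ B) (_ : s ≫ f = h) (R : Eff1Htpy g s),
      ∀ c, (f.f1 _ _ (R.H1 c)).val = (K.H1 c).val := by
  obtain ⟨s, ρ, hsρ⟩ := hf.exists_lift_cell1 (b := (base C).map g) (K.app (base C))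
  choose hs hρ using hsρ
  obtain ⟨σ, m, hσ⟩ := hf.exists_lift_of_cell2 _ (Fam2.conjByMap K ρ hs hρ (Idx1.cell C))
  obtain ⟨σ2, hσ2⟩ := hf.exists_lift_cell2
    ((m.eval (Idx2.cellL C)).symm.vcomp ((Fam2.conjBy ρ (Idx2.cell2 C)).vcomp
      (m.eval (Idx2.cellR C))))
    (Fam2.transport ((Idx2.cell2 C).map h) (fun x => (hs x.1).symm) (fun x => (hs x.2.1).symm)
      (fun x => (hσ ⟨x.1, x.2.1, x.2.2.1⟩).symm) (fun x => (hσ ⟨x.1, x.2.1, x.2.2.2.1⟩).symm))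
  exact ⟨Eff1Hom.ofConj ρ σ m σ2,
    Eff1Hom.ext hs (fun c c' π => hσ ⟨c, c', π⟩) (fun c c' π π' n => hσ2 ⟨c, c', π, π', n⟩),
    Eff1Htpy.ofConj ρ σ m σ2, hρ⟩

end Eff1Fib

theorem exists_map_htpy_to_id {A B : Eff1Obj} {f : B ⟶ A} {g s : A ⟶ B}
    (ε : Eff1Htpy (f ≫ g) (𝟙 B)) {η : Eff1Htpy (g ≫ f) (𝟙 A)}
    (triangle : Fam2 ((ε.app (base B)).map f) (η.app ((base B).map f)))
    (hs : s ≫ f = 𝟙 A) (R : Eff1Htpy g s)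
    (hR : ∀ a, (f.f1 _ _ (R.H1 a)).val = (η.H1 a).val) :
    ∃ M : B.A → ℕ, (∀ b : B.A, M b ∈ A.hom2 (f.f0 b) (f.f0 b)
        (f.f1 b ((f ≫ s).f0 b) ((ε.symm.trans (R.whiskerLeft f)).H1 b)).val
        (A.id1 (f.f0 b)).val) ∧
      CompComputes (fun b : B.A => B.α b) M := by
  have hsf : ∀ a, f.f0 (s.f0 a) = a := fun a => congrArg (fun φ : A ⟶ A => φ.f0 a) hs
  let bf := (base B).map f
  let fε := (ε.app (base B)).map f
  let fH := ((ε.symm.trans (R.whiskerLeft f)).app (base B)).map f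
  let fH_to_fR : Fam2 fH (fε.inv.comp ((R.app bf).map f)) :=
    (Fam2.mapComp f _ _).vcomp (Fam2.whiskR (Fam2.mapInv f _) _)
  let fε_inv_η_to_id : Fam2 (fε.inv.comp (η.app bf)) (Fam1.id bf) :=
    (Fam2.whiskL _ triangle.symm).vcomp (Fam2.rinv _)
  let M : Fam2 (fH.transport bf bf (fun _ => rfl) (fun b => hsf (f.f0 b))) (Fam1.id bf) :=
    (Fam2.transport fH_to_fR (fun _ => rfl) (fun b => hsf (f.f0 b)) (fun _ => rfl)
      (fun b => A.comp1_val_congr rfl rfl (hsf (f.f0 b)) _ _ _ _ rfl (hR (f.f0 b))) :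
      Fam2 _ (fε.inv.comp (η.app bf))).vcomp fε_inv_η_to_id
  exact ⟨fun b => (M.cell b).val, fun b => (M.cell b).2, M.tr⟩

/-- In `EFF₁`, a fibration `f : B ⟶ A` is trivial (a fibration
that is an equivalence) if and only if `f` has a section `s` for which there exist a
homotopy `H : 1_B ≃ s ∘ f` and a 2-homotopy `M : f H ∼ 1_f` (a computable family of
2-cells between `f(H₁ b)` and the identity 1-cell `1_{f b}`). -/
theorem EFF1_trivial_fibration_iff {B A : Eff1Obj} (f : B ⟶ A) (hf : Eff1Fib f) :
    Eff1Eqv f ↔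
    ∃ (s : A ⟶ B) (_ : s ≫ f = 𝟙 A) (H : Eff1Htpy (𝟙 B) (f ≫ s)) (M : B.A → ℕ),
      (∀ b : B.A, M b ∈ A.hom2 (f.f0 b) (f.f0 b)
        (f.f1 b ((f ≫ s).f0 b) (H.H1 b)).val (A.id1 (f.f0 b)).val) ∧
      CompComputes (fun b : B.A => B.α b) M := by
  constructor
  · rintro ⟨g, ⟨ε⟩, ⟨η⟩⟩
    obtain ⟨s, hs, R, hR⟩ := hf.exists_htpy_lift (ε.adjointify η)
    exact ⟨s, hs, ε.symm.trans (R.whiskerLeft f),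
      exists_map_htpy_to_id ε (ε.adjointifyTriangle η) hs R hR⟩
  · rintro ⟨s, hs, H, -⟩
    exact ⟨s, ⟨H.symm⟩, hs ▸ ⟨Eff1Htpy.refl _⟩⟩

end EffPaper
end
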